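/- arXiv:1211.6513 — 12 statements merged into one kernel-verified Lean document; each statement's English description precedes it below -/
import Mathlib

section
/- Let g and h be grouplike elements of H and let f ∈ H be a (1,g)-primitive element that does not lie in kG(H). If h⁻¹ f h − q f ∈ kG(H) for some scalar q ∈ k, then q is a root of unity, i.e. q^m = 1 for some integer m ≥ 1. -/
open scoped TensorProduct

section Helpers

variable {k : Type*} [Field k] {H : Type*} [Ring H] [Bialgebra k H]

/-- A grouplike element is not in the span of a linearly independent family of
grouplike elements distinct from it. -/
lemma grouplike_notMem_span [Nontrivial H] {n : ℕ} {w : Fin n → H}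
    (hw : LinearIndependent k w)
    (hwG : ∀ i, Coalgebra.comul (R := k) (w i) = w i ⊗ₜ[k] w i)
    {g : H} (hgU : IsUnit g) (hgG : Coalgebra.comul (R := k) g = g ⊗ₜ[k] g)
    (hgw : ∀ i, g ≠ w i) :
    g ∉ Submodule.span k (Set.range w) := by
  intro hmem
  obtain ⟨c, hc⟩ := (Submodule.mem_span_range_iff_exists_fun k).1 hmem
  obtain ⟨p', hp'⟩ := Submodule.exists_isCompl (Submodule.span k (Set.range w))
  set proj := (Submodule.span k (Set.range w)).linearProjOfIsCompl p' hp' with hproj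
  set dual : Fin n → H →ₗ[k] k := fun i =>
    Finsupp.lapply i ∘ₗ (hw.repr : _ →ₗ[k] (Fin n →₀ k)) ∘ₗ proj with hdualdef
  have hdual : ∀ i j, dual i (w j) = if j = i then 1 else 0 := by
    intro i j
    have h1 : proj (w j) = ⟨w j, Submodule.subset_span ⟨j, rfl⟩⟩ :=
      Submodule.linearProjOfIsCompl_apply_left hp' ⟨w j, Submodule.subset_span ⟨j, rfl⟩⟩
    have h2 := hw.repr_eq_single j ⟨w j, Submodule.subset_span ⟨j, rfl⟩⟩ rfl
    simp [hdualdef, h1, h2, Finsupp.single_apply]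
  have hdualg : ∀ i, dual i g = c i := by
    intro i
    rw [← hc]
    simp [map_sum, hdual, smul_eq_mul, mul_ite, mul_one, mul_zero]
  set Φ : Fin n → Fin n → (H ⊗[k] H →ₗ[k] k) := fun i j =>
    (TensorProduct.lid k k).toLinearMap ∘ₗ TensorProduct.map (dual i) (dual j) with hPhidef
  have hΦ : ∀ i j (x y : H), Φ i j (x ⊗ₜ[k] y) = dual i x * dual j y := by
    intro i j x y
    simp [hPhidef, smul_eq_mul]
  have he : (g ⊗ₜ[k] g : H ⊗[k] H) = ∑ l, c l • (w l ⊗ₜ[k] w l) := by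
    rw [← hgG, ← hc, map_sum]
    simp [hwG]
  have key : ∀ i j, c i * c j = if i = j then c i else 0 := by
    intro i j
    have h2 := congrArg (Φ i j) he
    rw [hΦ, hdualg, hdualg, map_sum] at h2
    have h3 : ∀ l, Φ i j (c l • (w l ⊗ₜ[k] w l))
        = c l * ((if l = i then (1:k) else 0) * (if l = j then 1 else 0)) := by
      intro l
      rw [map_smul, hΦ, hdual, hdual, smul_eq_mul]
    rw [Finset.sum_congr rfl fun l _ => h3 l] at h2
    rw [h2]
    by_cases hij : i = j
    · subst hij
      simp [Finset.sum_ite_eq', mul_ite]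
    · rw [if_neg hij]
      apply Finset.sum_eq_zero
      intro l _
      rcases eq_or_ne l i with rfl | hli
      · rw [if_pos rfl, if_neg hij, one_mul, mul_zero]
      · rw [if_neg hli, zero_mul, mul_zero]
  have hex : ∃ i, c i ≠ 0 := by
    by_contra hno
    push_neg at hno
    have hg0 : g = 0 := by rw [← hc]; simp [hno]
    exact hgU.ne_zero hg0
  obtain ⟨i, hi⟩ := hex
  have hci : c i = 1 := by
    have h4 := key i i
    rw [if_pos rfl] at h4
    have h4' : c i * c i = 1 * c i := by rw [one_mul]; exact h4
    exact mul_right_cancel₀ hi h4'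
  have hcj : ∀ j, j ≠ i → c j = 0 := by
    intro j hj
    have h4 := key i j
    rw [if_neg (fun h => hj h.symm)] at h4
    rcases mul_eq_zero.1 h4 with h5 | h5
    · exact absurd h5 hi
    · exact h5
  have : g = w i := by
    rw [← hc, Finset.sum_eq_single i (fun j _ hj => by rw [hcj j hj, zero_smul])
      (fun h => absurd (Finset.mem_univ i) h), hci, one_smul]
  exact hgw i this

/-- Any injective family of grouplike elements is linearly independent. -/
lemma grouplike_linearIndependent [Nontrivial H] :
    ∀ (n : ℕ) (v : Fin n → H), (∀ i, IsUnit (v i)) →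
      (∀ i, Coalgebra.comul (R := k) (v i) = v i ⊗ₜ[k] v i) →
      Function.Injective v → LinearIndependent k v := by
  intro n
  induction n with
  | zero => intro v _ _ _; exact linearIndependent_empty_type
  | succ n ih =>
    intro v hU hG hinj
    have htail : LinearIndependent k (Fin.tail v) :=
      ih (Fin.tail v) (fun i => hU i.succ) (fun i => hG i.succ)
        (fun a b hab => Fin.succ_injective n (hinj hab))
    have hnot : v 0 ∉ Submodule.span k (Set.range (Fin.tail v)) :=
      grouplike_notMem_span htail (fun i => hG i.succ) (hU 0) (hG 0)
        (fun i h => (Fin.succ_ne_zero i) (hinj h).symm)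
    have := linearIndependent_fin_cons.2 ⟨htail, hnot⟩
    rwa [Fin.cons_self_tail] at this
  
/-- Comultiplication of the inverse of a grouplike unit. -/
lemma comul_units_inv (u : Hˣ) (hu : Coalgebra.comul (R := k) (u : H) = (u : H) ⊗ₜ[k] (u : H)) :
    Coalgebra.comul (R := k) ((u⁻¹ : Hˣ) : H) = ((u⁻¹ : Hˣ) : H) ⊗ₜ[k] ((u⁻¹ : Hˣ) : H) := by
  have ha : Coalgebra.comul (R := k) ((u⁻¹ : Hˣ) : H) * ((u : H) ⊗ₜ[k] (u : H)) = 1 := by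
    rw [← hu, ← Bialgebra.comul_mul, Units.inv_mul, Bialgebra.comul_one]
  have hb : ((u : H) ⊗ₜ[k] (u : H)) * (((u⁻¹ : Hˣ) : H) ⊗ₜ[k] ((u⁻¹ : Hˣ) : H)) = 1 := by
    rw [Algebra.TensorProduct.tmul_mul_tmul, Units.mul_inv, ← Algebra.TensorProduct.one_def]
  exact left_inv_eq_right_inv ha hb

end Helpers

/-- Lemma 2.2(b): if `f` is a (1,g)-primitive element not in `kG(H)` and
`h⁻¹ f h − q f ∈ kG(H)` for a grouplike element `h`, then `q` is a root of unity. -/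
theorem skewPrimitive_conj_scalar_is_root_of_unity
    (k : Type*) [Field k] [IsAlgClosed k] [CharZero k]
    (H : Type*) [Ring H] [HopfAlgebra k H] [Module.Finite k H]
    (g h : Hˣ)
    (hg : Coalgebra.comul (R := k) (g : H) = (g : H) ⊗ₜ[k] (g : H))
    (hh : Coalgebra.comul (R := k) (h : H) = (h : H) ⊗ₜ[k] (h : H))
    (f : H)
    (hf : Coalgebra.comul (R := k) f = 1 ⊗ₜ[k] f + f ⊗ₜ[k] (g : H))
    (hfG : f ∉ Submodule.span k
      {x : H | IsUnit x ∧ Coalgebra.comul (R := k) x = x ⊗ₜ[k] x})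
    (q : k)
    (hq : ((h⁻¹ : Hˣ) : H) * f * (h : H) - q • f ∈ Submodule.span k
      {x : H | IsUnit x ∧ Coalgebra.comul (R := k) x = x ⊗ₜ[k] x}) :
    ∃ m : ℕ, 1 ≤ m ∧ q ^ m = 1 := by
  set GS : Set H := {x : H | IsUnit x ∧ Coalgebra.comul (R := k) x = x ⊗ₜ[k] x} with hGS
  set K : Submodule k H := Submodule.span k GS with hK
  have hnt : Nontrivial H := by
    by_contra hnt
    rw [not_nontrivial_iff_subsingleton] at hnt
    exact hfG (by rw [Subsingleton.elim f 0]; exact K.zero_mem)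
  -- comul of powers of h
  have hhpow : ∀ n : ℕ, Coalgebra.comul (R := k) ((h : H) ^ n)
      = ((h : H) ^ n) ⊗ₜ[k] ((h : H) ^ n) := by
    intro n
    rw [Bialgebra.comul_pow, hh, Algebra.TensorProduct.tmul_pow]
  -- conjugation preserves K
  have hconjK : ∀ x ∈ K, ((h⁻¹ : Hˣ) : H) * x * (h : H) ∈ K := by
    intro x hx
    induction hx using Submodule.span_induction with
    | mem y hy =>
      refine Submodule.subset_span ?_
      refine ⟨?_, ?_⟩
      · exact ((h⁻¹ : Hˣ).isUnit.mul hy.1).mul h.isUnit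
      · rw [Bialgebra.comul_mul, Bialgebra.comul_mul, hy.2, hh,
          comul_units_inv h hh, Algebra.TensorProduct.tmul_mul_tmul,
          Algebra.TensorProduct.tmul_mul_tmul]
    | zero => simpa using K.zero_mem
    | add y z _ _ hy hz =>
      have : ((h⁻¹ : Hˣ) : H) * (y + z) * (h : H)
          = ((h⁻¹ : Hˣ) : H) * y * (h : H) + ((h⁻¹ : Hˣ) : H) * z * (h : H) := by
        rw [mul_add, add_mul]
      rw [this]; exact K.add_mem hy hz
    | smul a y _ hy =>
      have : ((h⁻¹ : Hˣ) : H) * (a • y) * (h : H)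
          = a • (((h⁻¹ : Hˣ) : H) * y * (h : H)) := by
        rw [mul_smul_comm, smul_mul_assoc]
      rw [this]; exact K.smul_mem a hy
  -- iterated conjugation
  have step : ∀ n : ℕ, (((h ^ n)⁻¹ : Hˣ) : H) * f * ((h ^ n : Hˣ) : H) - q ^ n • f ∈ K := by
    intro n
    induction n with
    | zero => simp
    | succ n ih =>
      have e1 : (((h ^ (n + 1))⁻¹ : Hˣ) : H) * f * ((h ^ (n + 1) : Hˣ) : H) - q ^ (n + 1) • f
          = ((h⁻¹ : Hˣ) : H) * ((((h ^ n)⁻¹ : Hˣ) : H) * f * ((h ^ n : Hˣ) : H)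
              - q ^ n • f) * (h : H)
            + q ^ n • (((h⁻¹ : Hˣ) : H) * f * (h : H) - q • f) := by
        have h1 : ((h ^ (n + 1))⁻¹ : Hˣ) = h⁻¹ * (h ^ n)⁻¹ := by
          rw [pow_succ, mul_inv_rev]
        rw [h1, show ((h ^ (n + 1) : Hˣ) : H) = ((h ^ n : Hˣ) : H) * (h : H) by
          rw [pow_succ, Units.val_mul]]
        simp only [Units.val_mul, mul_sub, sub_mul, smul_sub, mul_smul_comm,
          smul_mul_assoc, smul_smul, mul_assoc, ← pow_succ]
        abel
      rw [e1]
      exact K.add_mem (hconjK _ ih) (K.smul_mem _ hq)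
  -- h has finite order
  have hord : ∃ N : ℕ, 1 ≤ N ∧ h ^ N = 1 := by
    have hni : ¬ Function.Injective (fun n : ℕ => h ^ n) := by
      intro hinj
      set d := Module.finrank k H with hd
      have hv : LinearIndependent k (fun i : Fin (d + 1) => ((h ^ (i : ℕ) : Hˣ) : H)) := by
        refine grouplike_linearIndependent (d + 1) _ (fun i => (h ^ (i : ℕ)).isUnit)
          (fun i => ?_) (fun a b hab => ?_)
        · rw [Units.val_pow_eq_pow_val]; exact hhpow _
        · have : h ^ (a : ℕ) = h ^ (b : ℕ) := Units.ext hab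
          exact Fin.ext (hinj this)
      have := hv.fintype_card_le_finrank
      simp only [Fintype.card_fin, ← hd] at this
      omega
    rw [Function.not_injective_iff] at hni
    obtain ⟨a, b, hab, hne⟩ := hni
    have hab' : h ^ a = h ^ b := hab
    rcases hne.lt_or_gt with hlt | hlt
    · refine ⟨b - a, by omega, ?_⟩
      have h6 : h ^ a * h ^ (b - a) = h ^ a * 1 := by
        rw [← pow_add, mul_one, show a + (b - a) = b by omega, ← hab']
      exact mul_left_cancel h6
    · refine ⟨a - b, by omega, ?_⟩
      have h6 : h ^ b * h ^ (a - b) = h ^ b * 1 := by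
        rw [← pow_add, mul_one, show b + (a - b) = a by omega, hab']
      exact mul_left_cancel h6
  obtain ⟨N, hN1, hNh⟩ := hord
  refine ⟨N, hN1, ?_⟩
  have hKN := step N
  rw [hNh] at hKN
  simp only [inv_one, Units.val_one, one_mul, mul_one] at hKN
  have hKN' : (1 - q ^ N) • f ∈ K := by
    rwa [sub_smul, one_smul]
  by_contra hne'
  apply hfG
  have h5 : (1 - q ^ N) ≠ 0 := sub_ne_zero.2 (fun hh' => hne' hh'.symm)
  have := K.smul_mem (1 - q ^ N)⁻¹ hKN'
  rwa [smul_smul, inv_mul_cancel₀ h5, one_smul] at this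
end

section
/- Let g be a grouplike element of H and let f ∈ H be a (1,g)-primitive element that does not lie in kG(H). If g⁻¹ f g − q f ∈ kG(H) for some scalar q ∈ k, then q is a root of unity and q ≠ 1 (i.e. q is a primitive n-th root of unity for some n ≥ 2). -/
open scoped TensorProduct
open Finset

section Aux
variable {k : Type*} [Field k] {H : Type*} [AddCommGroup H] [Module k H]

lemma tensor_extract {ι : Type*} (s : Finset ι) (v w : ι → H)
    (hv : LinearIndependent k (fun i : s => v i))
    (hsum : ∑ i ∈ s, v i ⊗ₜ[k] w i = 0) : ∀ i ∈ s, w i = 0 := by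
  classical
  intro i₀ hi₀
  have hinj : ∀ a ∈ s, ∀ b ∈ s, v a = v b → a = b := by
    intro a ha b hb hab
    have := hv.injective (a₁ := ⟨a, ha⟩) (a₂ := ⟨b, hb⟩) hab
    exact congrArg Subtype.val this
  have hr := (linearIndepOn_id_range_iff hv.injective).mpr hv
  have hmem : v i₀ ∈ hr.extend (Set.subset_univ _) :=
    hr.subset_extend _ ⟨⟨i₀, hi₀⟩, rfl⟩
  set B := Module.Basis.extend hr with hB
  set φ : H →ₗ[k] k := B.coord ⟨v i₀, hmem⟩ with hφ
  have hφv : ∀ j ∈ s, φ (v j) = if j = i₀ then 1 else 0 := by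
    intro j hj
    have hjmem : v j ∈ hr.extend (Set.subset_univ _) :=
      hr.subset_extend _ ⟨⟨j, hj⟩, rfl⟩
    have : v j = B ⟨v j, hjmem⟩ := (Module.Basis.extend_apply_self hr ⟨v j, hjmem⟩).symm
    rw [this, hφ, Module.Basis.coord_apply, B.repr_self, Finsupp.single_apply]
    by_cases h : j = i₀
    · subst h; simp
    · have : v j ≠ v i₀ := fun hvv => h (hinj j hj i₀ hi₀ hvv)
      simp [h, Subtype.ext_iff, this]
  have happ := congrArg
    (fun z => (TensorProduct.lid k H) ((LinearMap.rTensor H φ) z)) hsum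
  simp only [map_sum, LinearMap.rTensor_tmul, TensorProduct.lid_tmul, map_zero] at happ
  rw [Finset.sum_eq_single i₀ (fun j hj hne => by rw [hφv j hj, if_neg hne, zero_smul])
    (fun h => absurd hi₀ h)] at happ
  rw [hφv i₀ hi₀, if_pos rfl, one_smul] at happ
  exact happ

end Aux

section Hopf
variable {k : Type*} [Field k] {H : Type*} [Ring H] [HopfAlgebra k H]

/-- The set of grouplike elements. -/
def gSet (k : Type*) [Field k] (H : Type*) [Ring H] [HopfAlgebra k H] : Set H :=
  {x : H | IsUnit x ∧ Coalgebra.comul (R := k) x = x ⊗ₜ[k] x}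

lemma grp_indep [Nontrivial H] (s : Set H) (hfin : s.Finite) (hsub : s ⊆ gSet k H) :
    LinearIndependent k ((↑) : s → H) := by
  classical
  refine Set.Finite.induction_on
    (motive := fun s _ => s ⊆ gSet k H → LinearIndependent k ((↑) : s → H)) s hfin
    (fun _ => linearIndependent_empty_type) ?_ hsub
  clear hsub hfin
  intro a s has hsfin IH hsub
  have hsubs : s ⊆ gSet k H := fun x hx => hsub (Set.mem_insert_of_mem a hx)
  have haS : a ∈ gSet k H := hsub (Set.mem_insert a s)
  have hs : LinearIndependent k ((↑) : s → H) := IH hsubs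
  refine (linearIndepOn_id_insert has).mpr ?_
  refine ⟨hs, fun ha => ?_⟩
  obtain ⟨c, hcsupp, hcsum⟩ := Submodule.mem_span_set.mp ha
  -- comul a = a ⊗ a and a = ∑ c h • h
  have hΔa : Coalgebra.comul (R := k) a = a ⊗ₜ[k] a := haS.2
  have hsum0 : ∑ h ∈ c.support, h ⊗ₜ[k] (c h • h - c h • a) = 0 := by
    have e1 : Coalgebra.comul (R := k) a = ∑ h ∈ c.support, h ⊗ₜ[k] (c h • h) := by
      rw [← hcsum, Finsupp.sum, map_sum]
      refine Finset.sum_congr rfl fun h hh => ?_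
      have hhS : h ∈ gSet k H := hsubs (hcsupp hh)
      rw [map_smul, hhS.2, TensorProduct.smul_tmul', TensorProduct.smul_tmul]
    have e2 : a ⊗ₜ[k] a = ∑ h ∈ c.support, h ⊗ₜ[k] (c h • a) := by
      nth_rewrite 1 [← hcsum]
      rw [Finsupp.sum, TensorProduct.sum_tmul]
      exact Finset.sum_congr rfl fun h hh => TensorProduct.smul_tmul _ _ _
    calc ∑ h ∈ c.support, h ⊗ₜ[k] (c h • h - c h • a)
        = ∑ h ∈ c.support, (h ⊗ₜ[k] (c h • h) - h ⊗ₜ[k] (c h • a)) := by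
          refine Finset.sum_congr rfl fun h hh => ?_
          rw [TensorProduct.tmul_sub]
      _ = (∑ h ∈ c.support, h ⊗ₜ[k] (c h • h)) - ∑ h ∈ c.support, h ⊗ₜ[k] (c h • a) :=
          Finset.sum_sub_distrib _ _
      _ = 0 := by rw [← e1, ← e2, hΔa, sub_self]
  have hindsupp : LinearIndependent k (fun (i : {x // x ∈ c.support}) => (i : H)) := by
    have h1 : LinearIndependent k ((↑) : (↑c.support : Set H) → H) :=
      LinearIndepOn.mono (v := id) (t := (↑c.support : Set H)) hs (by exact_mod_cast hcsupp)
    exact h1.comp (Equiv.subtypeEquivRight (fun x => by simp)) (Equiv.injective _)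
  have hw := tensor_extract (k := k) (s := c.support) (v := id)
    (w := fun h => c h • h - c h • a) hindsupp hsum0
  -- all coefficients must vanish
  have hc0 : ∀ h ∈ c.support, c h = 0 := by
    intro h hh
    by_contra hch
    have := hw h hh
    have hha : h = a := by
      have : c h • h = c h • a := by linear_combination (norm := abel) this
      exact smul_right_injective H hch this
    exact has (hha ▸ hcsupp hh)
  have : a = 0 := by
    rw [← hcsum, Finsupp.sum]
    exact Finset.sum_eq_zero fun h hh => by rw [hc0 h hh, zero_smul]
  exact haS.1.ne_zero this
end Hopf

section Hopf2
variable {k : Type*} [Field k] {H : Type*} [Ring H] [HopfAlgebra k H]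

lemma comul_eq_algHom (x : H) :
    Coalgebra.comul (R := k) x = Bialgebra.comulAlgHom k H x :=
  (Bialgebra.comulAlgHom_apply k H x).symm

lemma one_mem_gSet : (1:H) ∈ gSet k H := by
  refine ⟨isUnit_one, ?_⟩
  rw [comul_eq_algHom, map_one, Algebra.TensorProduct.one_def]

lemma pow_mem_gSet (g : Hˣ) (hg : Coalgebra.comul (R := k) (g : H) = (g : H) ⊗ₜ[k] (g : H))
    (n : ℕ) : ((g:H)^n) ∈ gSet k H := by
  constructor
  · rw [← Units.val_pow_eq_pow_val]; exact (g^n).isUnit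
  · rw [comul_eq_algHom, map_pow, ← comul_eq_algHom, hg, Algebra.TensorProduct.tmul_pow]

lemma g_mem_gSet (g : Hˣ) (hg : Coalgebra.comul (R := k) (g : H) = (g : H) ⊗ₜ[k] (g : H)) :
    (g:H) ∈ gSet k H := ⟨g.isUnit, hg⟩

lemma comul_inv (g : Hˣ) (hg : Coalgebra.comul (R := k) (g : H) = (g : H) ⊗ₜ[k] (g : H)) :
    Coalgebra.comul (R := k) ((g⁻¹ : Hˣ) : H) = ((g⁻¹ : Hˣ) : H) ⊗ₜ[k] ((g⁻¹ : Hˣ) : H) := by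
  have h1 : Coalgebra.comul (R := k) ((g⁻¹ : Hˣ) : H) * Coalgebra.comul (R := k) (g : H)
      = 1 := by
    rw [comul_eq_algHom, comul_eq_algHom, ← map_mul, Units.inv_mul, map_one]
  have h2 : ((g:H) ⊗ₜ[k] (g:H)) * (((g⁻¹ : Hˣ) : H) ⊗ₜ[k] ((g⁻¹ : Hˣ) : H)) = 1 := by
    rw [Algebra.TensorProduct.tmul_mul_tmul, Units.mul_inv, Algebra.TensorProduct.one_def]
  calc Coalgebra.comul (R := k) ((g⁻¹ : Hˣ) : H)
      = Coalgebra.comul (R := k) ((g⁻¹ : Hˣ) : H) *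
        (((g:H) ⊗ₜ[k] (g:H)) * (((g⁻¹ : Hˣ) : H) ⊗ₜ[k] ((g⁻¹ : Hˣ) : H))) := by
        rw [h2, mul_one]
    _ = (Coalgebra.comul (R := k) ((g⁻¹ : Hˣ) : H) * Coalgebra.comul (R := k) (g : H)) *
        (((g⁻¹ : Hˣ) : H) ⊗ₜ[k] ((g⁻¹ : Hˣ) : H)) := by rw [← hg, mul_assoc]
    _ = ((g⁻¹ : Hˣ) : H) ⊗ₜ[k] ((g⁻¹ : Hˣ) : H) := by rw [h1, one_mul]

/-- A (1,g)-primitive element lying in the span of grouplikes equals `c • (1 - g)`. -/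
lemma prim_span [Nontrivial H] (g : Hˣ)
    (hg : Coalgebra.comul (R := k) (g : H) = (g : H) ⊗ₜ[k] (g : H))
    (x : H) (hx : x ∈ Submodule.span k (gSet k H))
    (hΔ : Coalgebra.comul (R := k) x = 1 ⊗ₜ[k] x + x ⊗ₜ[k] (g:H)) :
    ∃ c : k, x = c • ((1:H) - (g:H)) := by
  classical
  obtain ⟨c, hcsupp, hcsum⟩ := Submodule.mem_span_set.mp hx
  set F : Finset H := insert 1 (insert (g:H) c.support) with hF
  have h1F : (1:H) ∈ F := Finset.mem_insert_self _ _
  have hsubF : c.support ⊆ F := fun y hy =>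
    Finset.mem_insert_of_mem (Finset.mem_insert_of_mem hy)
  have hFsub : (F : Set H) ⊆ gSet k H := by
    intro y hy
    simp only [hF, Finset.coe_insert, Set.mem_insert_iff, Finset.mem_coe] at hy
    rcases hy with rfl | rfl | hy
    · exact one_mem_gSet
    · exact g_mem_gSet g hg
    · exact hcsupp hy
  have hxsum : x = ∑ h ∈ F, c h • h := by
    rw [← hcsum, Finsupp.sum]
    exact Finset.sum_subset hsubF
      (fun y _ hy => by rw [Finsupp.notMem_support_iff.mp hy, zero_smul])
  have e1 : Coalgebra.comul (R := k) x = ∑ h ∈ F, h ⊗ₜ[k] (c h • h) := by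
    conv_lhs => rw [hxsum]
    rw [map_sum]
    refine Finset.sum_congr rfl fun h hh => ?_
    rw [map_smul, (hFsub hh).2, TensorProduct.smul_tmul', TensorProduct.smul_tmul]
  have e2 : (1:H) ⊗ₜ[k] x = ∑ h ∈ F, h ⊗ₜ[k] (if h = 1 then x else 0) := by
    rw [show (∑ h ∈ F, h ⊗ₜ[k] (if h = 1 then x else 0))
        = ∑ h ∈ F, (if h = 1 then (1:H) ⊗ₜ[k] x else 0) from
      Finset.sum_congr rfl fun h hh => by
        split_ifs with h1 <;> simp [h1, TensorProduct.tmul_zero]]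
    rw [Finset.sum_ite_eq' F (1:H) (fun _ => (1:H) ⊗ₜ[k] x), if_pos h1F]
  have e3 : x ⊗ₜ[k] (g:H) = ∑ h ∈ F, h ⊗ₜ[k] (c h • (g:H)) := by
    conv_lhs => rw [hxsum]
    rw [TensorProduct.sum_tmul]
    exact Finset.sum_congr rfl fun h hh => TensorProduct.smul_tmul _ _ _
  have hsum0 : ∑ h ∈ F,
      h ⊗ₜ[k] (c h • h - ((if h = 1 then x else 0) + c h • (g:H))) = 0 := by
    have : ∀ h ∈ F, h ⊗ₜ[k] (c h • h - ((if h = 1 then x else 0) + c h • (g:H)))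
        = h ⊗ₜ[k] (c h • h) - (h ⊗ₜ[k] (if h = 1 then x else 0) + h ⊗ₜ[k] (c h • (g:H))) := by
      intro h _
      rw [TensorProduct.tmul_sub, TensorProduct.tmul_add]
    rw [Finset.sum_congr rfl this, Finset.sum_sub_distrib, Finset.sum_add_distrib,
      ← e1, ← e2, ← e3, ← hΔ, sub_self]
  have hindF : LinearIndependent k (fun (i : {y // y ∈ F}) => (i : H)) := by
    have h1 := grp_indep (k := k) (↑F : Set H) F.finite_toSet hFsub
    exact h1.comp (Equiv.subtypeEquivRight (fun y => by simp)) (Equiv.injective _)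
  have hw := tensor_extract (k := k) (s := F) (v := id)
    (w := fun h => c h • h - ((if h = 1 then x else 0) + c h • (g:H))) hindF hsum0
  have h1 : c 1 • (1:H) - (x + c 1 • (g:H)) = 0 := by simpa using hw 1 h1F
  have h2 : c 1 • (1:H) = x + c 1 • (g:H) := sub_eq_zero.mp h1
  exact ⟨c 1, by rw [smul_sub]; exact eq_sub_of_add_eq h2.symm⟩
end Hopf2

section Hopf3
variable {k : Type*} [Field k] {H : Type*} [Ring H] [HopfAlgebra k H]

lemma exists_order [Nontrivial H] [Module.Finite k H] (g : Hˣ)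
    (hg : Coalgebra.comul (R := k) (g : H) = (g : H) ⊗ₜ[k] (g : H)) :
    ∃ N : ℕ, 1 ≤ N ∧ g ^ N = 1 := by
  classical
  by_cases hinj : Function.Injective (fun n : ℕ => ((g:H)^n))
  · exfalso
    set n := Module.finrank k H + 1 with hn
    set t : Finset H := (Finset.range n).image (fun m => (g:H)^m) with ht
    have hcard : t.card = n := by
      rw [ht, Finset.card_image_of_injective _ hinj, Finset.card_range]
    have hsub : (↑t : Set H) ⊆ gSet k H := by
      intro y hy
      simp only [ht, Finset.coe_image, Set.mem_image, Finset.mem_coe] at hy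
      obtain ⟨m, _, rfl⟩ := hy
      exact pow_mem_gSet g hg m
    have hind := grp_indep (k := k) (↑t : Set H) t.finite_toSet hsub
    have hind' : LinearIndependent k (fun (i : {y // y ∈ t}) => (i : H)) :=
      hind.comp (Equiv.subtypeEquivRight (fun y => by simp)) (Equiv.injective _)
    have hle := hind'.fintype_card_le_finrank
    rw [Fintype.card_coe, hcard] at hle
    omega
  · rw [Function.not_injective_iff] at hinj
    obtain ⟨a, b, hab, hne⟩ := hinj
    rcases hne.lt_or_gt with hlt | hlt
    · refine ⟨b - a, by omega, ?_⟩
      have hu : g ^ a = g ^ b := Units.ext (by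
        simpa [Units.val_pow_eq_pow_val] using hab)
      have : g ^ a * g ^ (b - a) = g ^ a * 1 := by
        rw [← pow_add, Nat.add_sub_cancel' hlt.le, mul_one, ← hu]
      exact mul_left_cancel this
    · refine ⟨a - b, by omega, ?_⟩
      have hu : g ^ b = g ^ a := Units.ext (by
        simpa [Units.val_pow_eq_pow_val] using hab.symm)
      have : g ^ b * g ^ (a - b) = g ^ b * 1 := by
        rw [← pow_add, Nat.add_sub_cancel' hlt.le, mul_one, ← hu]
      exact mul_left_cancel this
end Hopf3

section Hopf4
variable {k : Type*} [Field k] [CharZero k] {H : Type*} [Ring H] [HopfAlgebra k H]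

lemma comm_skew_prim [Nontrivial H] [Module.Finite k H] (g : Hˣ)
    (hg : Coalgebra.comul (R := k) (g : H) = (g : H) ⊗ₜ[k] (g : H))
    (f : H) (hf : Coalgebra.comul (R := k) f = 1 ⊗ₜ[k] f + f ⊗ₜ[k] (g : H))
    (hcomm : (g:H) * f = f * (g:H)) :
    ∃ c : k, f = c • ((1:H) - (g:H)) := by
  classical
  have hint : IsIntegral k f := IsIntegral.of_finite k f
  set p := minpoly k f with hp
  set d := p.natDegree with hd
  have hd1 : 1 ≤ d := minpoly.natDegree_pos hint
  have hmonic : p.Monic := minpoly.monic hint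
  set c : ℕ → k := fun i => -(p.coeff i) with hc
  -- f ^ d as combination of lower powers
  have hfd : f ^ d = ∑ i ∈ Finset.range d, c i • f ^ i := by
    have haev : (Polynomial.aeval f) p = 0 := minpoly.aeval k f
    rw [Polynomial.aeval_eq_sum_range, Finset.sum_range_succ, ← hd,
      hmonic.coeff_natDegree, one_smul] at haev
    have h2 : ∑ x ∈ Finset.range d, p.coeff x • f ^ x = -f ^ d :=
      eq_neg_of_add_eq_zero_left haev
    rw [show f ^ d = -(∑ x ∈ Finset.range d, p.coeff x • f ^ x) from by
      rw [h2, neg_neg], ← Finset.sum_neg_distrib]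
    exact Finset.sum_congr rfl fun i _ => (neg_smul _ _).symm
  -- powers below d are linearly independent
  have hindep : LinearIndependent k (fun (i : Fin d) => f ^ (i : ℕ)) := by
    rw [Fintype.linearIndependent_iff]
    intro a ha
    by_contra hex
    push_neg at hex
    obtain ⟨i₀, hi₀⟩ := hex
    set Q : Polynomial k := ∑ i : Fin d, Polynomial.monomial (i:ℕ) (a i) with hQ
    have hcoeff : ∀ j : Fin d, Q.coeff (j:ℕ) = a j := by
      intro j
      rw [hQ, Polynomial.finset_sum_coeff]
      rw [Finset.sum_eq_single j (fun i _ hne => by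
        rw [Polynomial.coeff_monomial, if_neg (by
          exact fun h => hne (Fin.ext (by exact_mod_cast h)))])
        (fun h => absurd (Finset.mem_univ j) h)]
      rw [Polynomial.coeff_monomial, if_pos rfl]
    have hQ0 : Q ≠ 0 := fun h => hi₀ (by rw [← hcoeff i₀, h, Polynomial.coeff_zero])
    have haevQ : (Polynomial.aeval f) Q = 0 := by
      rw [hQ, map_sum]
      simp only [Polynomial.aeval_monomial, ← Algebra.smul_def]
      exact ha
    have hdegQ : Q.degree < p.degree := by
      rw [Polynomial.degree_eq_natDegree hmonic.ne_zero]
      refine lt_of_le_of_lt (Polynomial.degree_sum_le _ _) ?_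
      rw [Finset.sup_lt_iff (by exact_mod_cast WithBot.bot_lt_coe d)]
      intro i _
      exact lt_of_le_of_lt (Polynomial.degree_monomial_le _ _) (by exact_mod_cast i.isLt)
    have := minpoly.degree_le_of_ne_zero k f hQ0 haevQ
    exact absurd (lt_of_le_of_lt this hdegQ) (lt_irrefl _)
  -- comultiplication of powers
  have hcomm2 : Commute ((1:H) ⊗ₜ[k] f) (f ⊗ₜ[k] (g:H)) := by
    show _ * _ = _ * _
    rw [Algebra.TensorProduct.tmul_mul_tmul, Algebra.TensorProduct.tmul_mul_tmul,
      one_mul, mul_one, hcomm]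
  have hΔpow : ∀ n : ℕ, Coalgebra.comul (R := k) (f ^ n)
      = ∑ i ∈ Finset.range (n+1),
          ((n.choose i : k)) • ((f ^ i) ⊗ₜ[k] (f ^ (n-i) * (g:H) ^ i)) := by
    intro n
    rw [comul_eq_algHom, map_pow, ← comul_eq_algHom, hf, hcomm2.add_pow,
      ← Finset.sum_range_reflect]
    refine Finset.sum_congr rfl fun i hi => ?_
    have hin : i ≤ n := by have := Finset.mem_range.mp hi; omega
    have hidx : n + 1 - 1 - i = n - i := by omega
    have h1 : ((1:H) ⊗ₜ[k] f) ^ (n - i) = (1:H) ⊗ₜ[k] (f ^ (n-i)) := by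
      rw [Algebra.TensorProduct.tmul_pow, one_pow]
    have h2 : (f ⊗ₜ[k] (g:H)) ^ (n - (n - i)) = (f ^ i) ⊗ₜ[k] ((g:H) ^ i) := by
      rw [Algebra.TensorProduct.tmul_pow, Nat.sub_sub_self hin]
    rw [hidx, h1, h2, Algebra.TensorProduct.tmul_mul_tmul, one_mul, Nat.choose_symm hin,
      Nat.cast_smul_eq_nsmul k, nsmul_eq_mul,
      (Nat.cast_commute (n.choose i) ((f ^ i) ⊗ₜ[k] (f ^ (n-i) * (g:H) ^ i))).eq]
  -- first expansion of comul (f ^ d)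
  have E1 : Coalgebra.comul (R := k) (f ^ d) = ∑ i ∈ Finset.range d,
      (f ^ i) ⊗ₜ[k] (((d.choose i : k)) • (f ^ (d-i) * (g:H) ^ i) + c i • (g:H) ^ d) := by
    rw [hΔpow d, Finset.sum_range_succ, Nat.choose_self, Nat.cast_one, one_smul,
      Nat.sub_self, pow_zero, one_mul]
    nth_rewrite 1 [hfd]
    rw [TensorProduct.sum_tmul, ← Finset.sum_add_distrib]
    refine Finset.sum_congr rfl fun i hi => ?_
    simp only [TensorProduct.tmul_add, TensorProduct.smul_tmul, TensorProduct.tmul_smul]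
  -- second expansion of comul (f ^ d)
  have E2 : Coalgebra.comul (R := k) (f ^ d) = ∑ i ∈ Finset.range d,
      (f ^ i) ⊗ₜ[k] (∑ n ∈ Finset.range d,
        (c n * (n.choose i : k)) • (f ^ (n-i) * (g:H) ^ i)) := by
    conv_lhs => rw [hfd]
    rw [map_sum]
    have step : ∀ n ∈ Finset.range d, Coalgebra.comul (R := k) (c n • f ^ n)
        = ∑ i ∈ Finset.range d,
            (c n * (n.choose i : k)) • ((f ^ i) ⊗ₜ[k] (f ^ (n-i) * (g:H) ^ i)) := by
      intro n hn
      have hnd : n < d := Finset.mem_range.mp hn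
      rw [map_smul, hΔpow n, Finset.smul_sum]
      rw [Finset.sum_congr rfl (fun i _ =>
        smul_smul (c n) ((n.choose i : k)) ((f ^ i) ⊗ₜ[k] (f ^ (n-i) * (g:H) ^ i)))]
      refine Finset.sum_subset (Finset.range_subset_range.mpr (by omega)) ?_
      intro i hiD hiN
      have hni : n < i := by
        simp only [Finset.mem_range] at hiD hiN; omega
      rw [Nat.choose_eq_zero_of_lt hni, Nat.cast_zero, mul_zero, zero_smul]
    rw [Finset.sum_congr rfl step, Finset.sum_comm]
    refine Finset.sum_congr rfl fun i hi => ?_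
    rw [TensorProduct.tmul_sum]
    exact Finset.sum_congr rfl fun n hn => (TensorProduct.tmul_smul _ _ _).symm
  -- the combined identity
  have main : ∑ i ∈ Finset.range d, (f ^ i) ⊗ₜ[k]
      ( (((d.choose i : k)) • (f ^ (d-i) * (g:H) ^ i) + c i • (g:H) ^ d)
        - ∑ n ∈ Finset.range d, (c n * (n.choose i : k)) • (f ^ (n-i) * (g:H) ^ i) ) = 0 := by
    rw [Finset.sum_congr rfl (fun i (_ : i ∈ Finset.range d) =>
      TensorProduct.tmul_sub (f ^ i)
        (((d.choose i : k)) • (f ^ (d-i) * (g:H) ^ i) + c i • (g:H) ^ d)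
        (∑ n ∈ Finset.range d, (c n * (n.choose i : k)) • (f ^ (n-i) * (g:H) ^ i)))]
    rw [Finset.sum_sub_distrib, sub_eq_zero]
    exact E1.symm.trans E2
  -- independence over the subtype of range d
  have hind' : LinearIndependent k (fun (i : {x // x ∈ Finset.range d}) => f ^ (i : ℕ)) := by
    refine hindep.comp (fun (i : {x // x ∈ Finset.range d}) =>
      (⟨(i : ℕ), Finset.mem_range.mp i.2⟩ : Fin d)) ?_
    intro a b hab
    exact Subtype.ext (by exact congrArg Fin.val hab)
  have hw := tensor_extract (k := k) (s := Finset.range d) (v := fun i => f ^ i)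
    (w := fun i => (((d.choose i : k)) • (f ^ (d-i) * (g:H) ^ i) + c i • (g:H) ^ d)
        - ∑ n ∈ Finset.range d, (c n * (n.choose i : k)) • (f ^ (n-i) * (g:H) ^ i))
    hind' main
  have hd1' : d - 1 ∈ Finset.range d := Finset.mem_range.mpr (by omega)
  have hsum1 : ∑ n ∈ Finset.range d,
      (c n * (n.choose (d-1) : k)) • (f ^ (n-(d-1)) * (g:H) ^ (d-1))
      = c (d-1) • ((g:H) ^ (d-1)) := by
    rw [Finset.sum_eq_single (d-1)]
    · rw [Nat.choose_self, Nat.cast_one, mul_one, Nat.sub_self, pow_zero, one_mul]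
    · intro n hn hne
      have hlt : n < d - 1 := by
        have := Finset.mem_range.mp hn; omega
      rw [Nat.choose_eq_zero_of_lt hlt, Nat.cast_zero, mul_zero, zero_smul]
    · intro h; exact absurd hd1' h
  have hch : (d.choose (d-1)) = d := by
    have h' : d - (d - 1) = 1 := by omega
    rw [← Nat.choose_symm (Nat.sub_le d 1), h', Nat.choose_one_right]
  have h1d : d - (d-1) = 1 := by omega
  have hWW : (d : k) • (f * (g:H) ^ (d-1)) + c (d-1) • (g:H) ^ d
      - c (d-1) • ((g:H) ^ (d-1)) = 0 := by
    have h := hw (d-1) hd1'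
    simp only [hsum1, hch, h1d, pow_one] at h
    exact h
  -- multiply on the right by the inverse of g^(d-1)
  set u : H := (((g^(d-1))⁻¹ : Hˣ) : H) with hu
  have hu1 : (g:H)^(d-1) * u = 1 := by
    rw [hu, ← Units.val_pow_eq_pow_val]
    exact Units.mul_inv _
  have hu2 : (g:H)^d * u = (g:H) := by
    have hdd : (d - 1) + 1 = d := by omega
    calc (g:H)^d * u = ((g:H) * (g:H)^(d-1)) * u := by rw [← pow_succ', hdd]
      _ = (g:H) * ((g:H)^(d-1) * u) := by rw [mul_assoc]
      _ = (g:H) := by rw [hu1, mul_one]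
  have hfin : (d:k) • f + c (d-1) • (g:H) - c (d-1) • (1:H) = 0 := by
    have h := congrArg (fun z => z * u) hWW
    simp only [sub_mul, add_mul, zero_mul, smul_mul_assoc, mul_assoc, hu1, hu2,
      mul_one] at h
    exact h
  have hdne : (d:k) ≠ 0 := Nat.cast_ne_zero.mpr (by omega)
  refine ⟨(d:k)⁻¹ * c (d-1), ?_⟩
  have hdf : (d:k) • f = c (d-1) • (1:H) - c (d-1) • (g:H) := by
    have h4 : (d:k) • f + (c (d-1) • (g:H) - c (d-1) • (1:H)) = 0 := by
      rw [← add_sub_assoc]; exact hfin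
    have h5 := eq_neg_of_add_eq_zero_left h4
    rwa [neg_sub] at h5
  calc f = (d:k)⁻¹ • ((d:k) • f) := by rw [smul_smul, inv_mul_cancel₀ hdne, one_smul]
    _ = (d:k)⁻¹ • (c (d-1) • ((1:H) - (g:H))) := by rw [hdf, ← smul_sub]
    _ = ((d:k)⁻¹ * c (d-1)) • ((1:H) - (g:H)) := by rw [smul_smul]
end Hopf4

/-- Lemma 2.2(c): if `f` is a (1,g)-primitive element not in `kG(H)` and
`g⁻¹ f g − q f ∈ kG(H)`, then `q` is a root of unity different from 1. -/
theorem skewPrimitive_self_conj_scalar_is_primitive_root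
    (k : Type*) [Field k] [IsAlgClosed k] [CharZero k]
    (H : Type*) [Ring H] [HopfAlgebra k H] [Module.Finite k H]
    (g : Hˣ)
    (hg : Coalgebra.comul (R := k) (g : H) = (g : H) ⊗ₜ[k] (g : H))
    (f : H)
    (hf : Coalgebra.comul (R := k) f = 1 ⊗ₜ[k] f + f ⊗ₜ[k] (g : H))
    (hfG : f ∉ Submodule.span k
      {x : H | IsUnit x ∧ Coalgebra.comul (R := k) x = x ⊗ₜ[k] x})
    (q : k)
    (hq : ((g⁻¹ : Hˣ) : H) * f * (g : H) - q • f ∈ Submodule.span k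
      {x : H | IsUnit x ∧ Coalgebra.comul (R := k) x = x ⊗ₜ[k] x}) :
    (∃ m : ℕ, 1 ≤ m ∧ q ^ m = 1) ∧ q ≠ 1 := by
  classical
  have hnt : Nontrivial H := by
    rcases subsingleton_or_nontrivial H with h | h
    · exact absurd (by rw [Subsingleton.elim f 0]; exact Submodule.zero_mem _) hfG
    · exact h
  have hfG' : f ∉ Submodule.span k (gSet k H) := hfG
  set x : H := ((g⁻¹ : Hˣ) : H) * f * (g : H) - q • f with hx
  have hxK : x ∈ Submodule.span k (gSet k H) := hq
  have hΔgi := comul_inv (k := k) g hg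
  have hΔconj : Coalgebra.comul (R := k) (((g⁻¹ : Hˣ) : H) * f * (g : H))
      = 1 ⊗ₜ[k] (((g⁻¹ : Hˣ) : H) * f * (g : H))
        + (((g⁻¹ : Hˣ) : H) * f * (g : H)) ⊗ₜ[k] (g:H) := by
    rw [comul_eq_algHom, map_mul, map_mul, ← comul_eq_algHom (x := ((g⁻¹:Hˣ):H)),
      ← comul_eq_algHom (x := f), ← comul_eq_algHom (x := (g:H)), hΔgi, hf, hg]
    simp only [mul_add, add_mul, Algebra.TensorProduct.tmul_mul_tmul, mul_one,
      Units.inv_mul, one_mul]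
  have hΔx : Coalgebra.comul (R := k) x = 1 ⊗ₜ[k] x + x ⊗ₜ[k] (g:H) := by
    rw [hx, map_sub, map_smul, hΔconj, hf]
    rw [show (1:H) ⊗ₜ[k] (((g⁻¹:Hˣ):H) * f * (g:H) - q • f)
        = 1 ⊗ₜ[k] (((g⁻¹:Hˣ):H) * f * (g:H)) - q • ((1:H) ⊗ₜ[k] f) from by
      rw [TensorProduct.tmul_sub, TensorProduct.tmul_smul]]
    rw [show (((g⁻¹:Hˣ):H) * f * (g:H) - q • f) ⊗ₜ[k] (g:H)
        = (((g⁻¹:Hˣ):H) * f * (g:H)) ⊗ₜ[k] (g:H) - q • (f ⊗ₜ[k] (g:H)) from by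
      rw [TensorProduct.sub_tmul, ← TensorProduct.smul_tmul']]
    rw [smul_add]
    abel
  obtain ⟨c0, hc0⟩ := prim_span (k := k) g hg x hxK hΔx
  have hconj : ((g⁻¹ : Hˣ) : H) * f * (g : H) = q • f + x := by
    rw [hx]; abel
  have hxconj : ((g⁻¹ : Hˣ) : H) * x * (g : H) = x := by
    rw [hc0]
    simp only [mul_smul_comm, smul_mul_assoc, mul_sub, sub_mul, mul_one,
      Units.inv_mul, one_mul]
  have key : ∀ n : ℕ, (((g^n)⁻¹ : Hˣ) : H) * f * ((g^n : Hˣ) : H)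
      = q ^ n • f + (∑ j ∈ Finset.range n, q ^ j) • x := by
    intro n
    induction n with
    | zero => simp
    | succ n ih =>
      have h1 : (((g^(n+1))⁻¹ : Hˣ) : H) * f * ((g^(n+1) : Hˣ) : H)
          = ((g⁻¹:Hˣ):H) * ((((g^n)⁻¹ : Hˣ):H) * f * ((g^n : Hˣ):H)) * (g:H) := by
        simp only [pow_succ, mul_inv_rev, Units.val_mul, mul_assoc]
      rw [h1, ih, mul_add, add_mul, mul_smul_comm, mul_smul_comm, smul_mul_assoc,
        smul_mul_assoc, hconj, hxconj, smul_add, smul_smul, ← pow_succ,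
        Finset.sum_range_succ, add_smul]
      abel
  obtain ⟨N, hN1, hgN⟩ := exists_order (k := k) g hg
  have hkey := key N
  rw [hgN] at hkey
  simp only [inv_one, Units.val_one, one_mul, mul_one] at hkey
  constructor
  · refine ⟨N, hN1, ?_⟩
    by_contra hqN
    have hne : (1 : k) - q^N ≠ 0 := sub_ne_zero.mpr fun h => hqN h.symm
    have hsub : f - q^N • f = ((∑ j ∈ Finset.range N, q ^ j) * c0) • ((1:H) - (g:H)) := by
      have h9 : f - q^N • f = (∑ j ∈ Finset.range N, q ^ j) • x :=
        sub_eq_iff_eq_add'.mpr hkey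
      rw [h9, hc0, smul_smul]
    have hfv : f = ((1 - q^N)⁻¹ * ((∑ j ∈ Finset.range N, q ^ j) * c0)) • ((1:H) - (g:H)) := by
      have h5 : ((1:k) - q^N) • f = ((∑ j ∈ Finset.range N, q ^ j) * c0) • ((1:H) - (g:H)) := by
        rw [sub_smul, one_smul]; exact hsub
      rw [mul_smul, ← h5, smul_smul, inv_mul_cancel₀ hne, one_smul]
    refine hfG' ?_
    rw [hfv]
    exact Submodule.smul_mem _ _ (Submodule.sub_mem _
      (Submodule.subset_span one_mem_gSet)
      (Submodule.subset_span (g_mem_gSet g hg)))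
  · intro hq1
    have hsN : (∑ j ∈ Finset.range N, q ^ j) = (N:k) := by
      rw [hq1]; simp
    have hx0 : x = 0 := by
      have h6 := hkey
      rw [hsN, hq1, one_pow, one_smul] at h6
      have h7 : (N:k) • x = 0 := (left_eq_add.mp h6)
      have hN0 : (N:k) ≠ 0 := Nat.cast_ne_zero.mpr (by omega)
      exact (smul_eq_zero.mp h7).resolve_left hN0
    have hcm : (g:H) * f = f * (g:H) := by
      have h3 : ((g⁻¹:Hˣ):H) * f * (g:H) = f := by
        rw [hconj, hq1, one_smul, hx0, add_zero]
      have h4 := congrArg (fun z => (g:H) * z) h3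
      simp only [← mul_assoc, Units.mul_inv, one_mul] at h4
      exact h4.symm
    obtain ⟨c1, hc1⟩ := comm_skew_prim (k := k) g hg f hf hcm
    refine hfG' ?_
    rw [hc1]
    exact Submodule.smul_mem _ _ (Submodule.sub_mem _
      (Submodule.subset_span one_mem_gSet)
      (Submodule.subset_span (g_mem_gSet g hg)))
end

section
/- The element w = Σ_{i=1}^{n} ι(e_i) ι(e_{n+i}) of the exterior algebra Λ(V) satisfies w^n = n! · ι(e_1) ι(e_{n+1}) ι(e_2) ι(e_{n+2}) ⋯ ι(e_n) ι(e_{2n}); in particular, since k has characteristic zero, w^n ≠ 0. -/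
open ExteriorAlgebra

section AuxCommute

variable {R : Type*} [Ring R]

lemma aux_mem_mul_prod : ∀ (l : List R), l.Pairwise Commute →
    (∀ y ∈ l, y * y = 0) → ∀ x ∈ l, x * l.prod = 0 := by
  intro l
  induction l with
  | nil => simp
  | cons y t ih =>
    intro hc hsq x hx
    obtain ⟨h1, h2⟩ := List.pairwise_cons.mp hc
    rw [List.prod_cons]
    rcases List.mem_cons.mp hx with rfl | hx
    · rw [← mul_assoc, hsq x (List.mem_cons_self), zero_mul]
    · have hcy : Commute y x := h1 x hx
      rw [← mul_assoc, ← hcy.eq, mul_assoc,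
        ih h2 (fun z hz => hsq z (List.mem_cons_of_mem _ hz)) x hx, mul_zero]

lemma aux_sum_mul_prod (l : List R) (hc : l.Pairwise Commute)
    (hsq : ∀ y ∈ l, y * y = 0) : l.sum * l.prod = 0 := by
  have h : l.sum * l.prod = (l.map (fun x => x * l.prod)).sum := by
    rw [List.sum_map_mul_right, List.map_id']
  rw [h]
  apply List.sum_eq_zero
  intro z hz
  obtain ⟨x, hx, rfl⟩ := List.mem_map.mp hz
  exact aux_mem_mul_prod l hc hsq x hx

/-- For a list of pairwise commuting square-zero elements,
`(sum l) ^ (length l) = (length l)! • prod l`. -/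
lemma aux_sum_pow : ∀ (l : List R), l.Pairwise Commute →
    (∀ y ∈ l, y * y = 0) → l.sum ^ l.length = l.length.factorial • l.prod := by
  intro l
  induction l with
  | nil => simp
  | cons x t ih =>
    intro hc hsq
    obtain ⟨h1, h2⟩ := List.pairwise_cons.mp hc
    have hsqt : ∀ y ∈ t, y * y = 0 := fun y hy => hsq y (List.mem_cons_of_mem _ hy)
    have iht := ih h2 hsqt
    have hx2 : x * x = 0 := hsq x (List.mem_cons_self)
    have hcomm : Commute x t.sum := Commute.list_sum_right _ _ h1
    set m := t.length with hm
    have hS1 : t.sum ^ (m + 1) = 0 := by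
      rw [pow_succ', iht, mul_smul_comm, aux_sum_mul_prod t h2 hsqt, smul_zero]
    rw [List.sum_cons, List.length_cons, Commute.add_pow hcomm,
      Finset.sum_range_succ', Finset.sum_range_succ']
    have hzero : ∀ i ∈ Finset.range m,
        x ^ (i + 1 + 1) * t.sum ^ (m + 1 - (i + 1 + 1)) * ((m+1).choose (i+1+1) : R) = 0 := by
      intro i _
      have : x ^ (i + 1 + 1) = 0 := by
        rw [pow_succ, pow_succ, mul_assoc, hx2, mul_zero]
      rw [this, zero_mul, zero_mul]
    rw [Finset.sum_eq_zero hzero]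
    simp only [pow_zero, pow_one, one_mul, Nat.add_sub_cancel, Nat.sub_zero,
      Nat.choose_one_right, Nat.choose_zero_right, Nat.cast_one, mul_one, zero_add]
    rw [hS1, add_zero, iht, List.prod_cons, Nat.factorial_succ]
    rw [mul_smul_comm, mul_smul, ← Nat.cast_smul_eq_nsmul R (m+1), smul_comm]
    rw [Nat.cast_smul_eq_nsmul]
    rw [smul_mul_assoc]
    congr 1
    rw [← Nat.cast_smul_eq_nsmul R, smul_eq_mul, (Nat.cast_commute (m+1) (x * t.prod)).eq]

lemma aux_anticomm (x y z : R)
    (hxy : x * y = -(y * x)) (hxz : x * z = -(z * x)) : Commute x (y * z) := by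
  show x * (y * z) = (y * z) * x
  calc x * (y * z) = (x * y) * z := by rw [mul_assoc]
    _ = -(y * (x * z)) := by rw [hxy, neg_mul, mul_assoc]
    _ = -(y * -(z * x)) := by rw [hxz]
    _ = (y * z) * x := by rw [mul_neg, neg_neg, mul_assoc]

lemma aux_sq_zero (A B : R) (hAA : A * A = 0) (hBA : B * A = -(A * B)) :
    (A * B) * (A * B) = 0 := by
  calc (A * B) * (A * B) = A * ((B * A) * B) := by rw [mul_assoc, ← mul_assoc B A B]
    _ = -(A * A * (B * B)) := by
        rw [hBA, neg_mul, mul_neg, mul_assoc, ← mul_assoc A A (B * B)]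
    _ = 0 := by rw [hAA, zero_mul, neg_zero]

end AuxCommute

lemma aux_pair_prod {R : Type*} [Monoid R] (a b : ℕ → R) :
    ∀ n : ℕ, (List.ofFn (fun i : Fin n => a i * b i)).prod =
      (List.ofFn (fun j : Fin (2 * n) =>
        if (j : ℕ) % 2 = 0 then a ((j : ℕ) / 2) else b ((j : ℕ) / 2))).prod := by
  intro n
  induction n with
  | zero => simp
  | succ n ih =>
    rw [List.ofFn_succ', List.concat_eq_append, List.prod_append, List.prod_cons,
      List.prod_nil, mul_one]
    have h2 : (List.ofFn (fun j : Fin (2 * (n + 1)) =>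
        if (j : ℕ) % 2 = 0 then a ((j : ℕ) / 2) else b ((j : ℕ) / 2))) =
        (List.ofFn (fun j : Fin (2 * n) =>
          if (j : ℕ) % 2 = 0 then a ((j : ℕ) / 2) else b ((j : ℕ) / 2))) ++
        [a n, b n] := by
      have := List.ofFn_add (f := fun j : Fin (2 * n + 2) =>
        if (j : ℕ) % 2 = 0 then a ((j : ℕ) / 2) else b ((j : ℕ) / 2)) (n := 2 * n) (m := 2)
      rw [show (2 * (n+1)) = 2 * n + 2 by ring]
      rw [this]
      congr 1
      have e0 : (2 * n) % 2 = 0 := by omega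
      have e1 : (2 * n + 1) % 2 = 1 := by omega
      simp [List.ofFn_succ, Fin.natAdd, e0, e1]
      congr 1
      omega
    simp only [Fin.coe_castSucc, Fin.val_last]
    rw [h2, List.prod_append, List.prod_cons, List.prod_cons, List.prod_nil, mul_one, ih]

/-- The interleaving permutation of `Fin (2*n)`. -/
def auxPerm (n : ℕ) : Equiv.Perm (Fin (2 * n)) where
  toFun j := ⟨if (j : ℕ) % 2 = 0 then (j : ℕ) / 2 else n + (j : ℕ) / 2, by
    have := j.2; split <;> omega⟩
  invFun i := ⟨if (i : ℕ) < n then 2 * (i : ℕ) else 2 * ((i : ℕ) - n) + 1, by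
    have := i.2; split <;> omega⟩
  left_inv j := by
    apply Fin.ext
    have := j.2
    dsimp only
    split_ifs <;> omega
  right_inv i := by
    apply Fin.ext
    have := i.2
    dsimp only
    split_ifs <;> omega

lemma auxPerm_coe (n : ℕ) (j : Fin (2 * n)) :
    ((auxPerm n j : Fin (2 * n)) : ℕ) =
      if (j : ℕ) % 2 = 0 then (j : ℕ) / 2 else n + (j : ℕ) / 2 := rfl

/-- Lemma 4.1(d) (key computation): in the exterior algebra `Λ(k^{2n})`, the element
`w = Σ_{i=1}^n e_i ∧ e_{n+i}` satisfies `w^n = n! ⬝ e_1 ∧ e_{n+1} ∧ ⋯ ∧ e_n ∧ e_{2n} ≠ 0`. -/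
theorem exteriorAlgebra_sum_pow
    (k : Type*) [Field k] [CharZero k] (n : ℕ) (hn : 1 ≤ n) :
    let e : Fin (2 * n) → (Fin (2 * n) → k) := fun i => Pi.single i 1
    let w : ExteriorAlgebra k (Fin (2 * n) → k) :=
      ∑ i : Fin n, ι k (e ⟨(i : ℕ), by omega⟩) * ι k (e ⟨n + (i : ℕ), by omega⟩)
    w ^ n = n.factorial •
        (List.ofFn (fun i : Fin n =>
          ι k (e ⟨(i : ℕ), by omega⟩) * ι k (e ⟨n + (i : ℕ), by omega⟩))).prod
      ∧ w ^ n ≠ 0 := by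
  intro e w
  have h2n : 0 < 2 * n := by omega
  have he : ∀ x : Fin (2 * n), e x = Pi.single x 1 := fun _ => rfl
  have sw : ∀ x y : Fin (2 * n) → k, ι k x * ι k y = -(ι k y * ι k x) := fun x y =>
    eq_neg_of_add_eq_zero_left (ι_add_mul_swap x y)
  set L : List (ExteriorAlgebra k (Fin (2 * n) → k)) := List.ofFn (fun i : Fin n =>
    ι k (e ⟨(i : ℕ), by omega⟩) * ι k (e ⟨n + (i : ℕ), by omega⟩)) with hL
  have hcomm : L.Pairwise Commute := by
    rw [hL, List.pairwise_ofFn]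
    intro i j _
    exact Commute.mul_left
      (aux_anticomm _ _ _ (sw _ _) (sw _ _)) (aux_anticomm _ _ _ (sw _ _) (sw _ _))
  have hsq : ∀ y ∈ L, y * y = 0 := by
    intro y hy
    rw [hL, List.mem_ofFn] at hy
    obtain ⟨i, rfl⟩ := hy
    exact aux_sq_zero _ _ (ι_sq_zero _) (sw _ _)
  have hsum : L.sum = w := by rw [hL, List.sum_ofFn]
  have hlen : L.length = n := by rw [hL, List.length_ofFn]
  have key := aux_sum_pow L hcomm hsq
  rw [hsum, hlen] at key
  refine ⟨key, ?_⟩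
  -- nonvanishing via the determinant functional
  set v : Fin (2 * n) → (Fin (2 * n) → k) :=
    fun j => Pi.single (auxPerm n j) 1 with hv
  have hprod : L.prod = ιMulti k (2 * n) v := by
    rw [ιMulti_apply]
    have hp := aux_pair_prod
      (fun m : ℕ => ι k (e ⟨m % (2 * n), Nat.mod_lt _ h2n⟩))
      (fun m : ℕ => ι k (e ⟨(n + m) % (2 * n), Nat.mod_lt _ h2n⟩)) n
    have ha : L = List.ofFn (fun i : Fin n =>
        (fun m : ℕ => ι k (e ⟨m % (2 * n), Nat.mod_lt _ h2n⟩)) (i : ℕ) *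
        (fun m : ℕ => ι k (e ⟨(n + m) % (2 * n), Nat.mod_lt _ h2n⟩)) (i : ℕ)) := by
      rw [hL]
      congr 1
      funext i
      have hi1 : (i : ℕ) % (2 * n) = (i : ℕ) := Nat.mod_eq_of_lt (by omega)
      have hi2 : (n + (i : ℕ)) % (2 * n) = n + (i : ℕ) := Nat.mod_eq_of_lt (by omega)
      congr 1 <;> · congr 1; exact congrArg e (Fin.ext (by simp [hi1, hi2]))
    rw [ha, hp]
    congr 1
    rw [List.ofFn_inj]
    funext j
    have hj := j.2
    by_cases hpar : (j : ℕ) % 2 = 0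
    · rw [if_pos hpar]
      exact congrArg (fun x : Fin (2 * n) => ι k (e x)) (Fin.ext (by
        rw [auxPerm_coe, if_pos hpar]
        exact Nat.mod_eq_of_lt (by omega)))
    · rw [if_neg hpar]
      exact congrArg (fun x : Fin (2 * n) => ι k (e x)) (Fin.ext (by
        rw [auxPerm_coe, if_neg hpar]
        exact Nat.mod_eq_of_lt (by omega)))
  have hφ : liftAlternating
      (Pi.single (2 * n) (Matrix.detRowAlternating : (Fin (2 * n) → k) [⋀^Fin (2 * n)]→ₗ[k] k))
      (ιMulti k (2 * n) v) = ((Equiv.Perm.sign (auxPerm n) : ℤ) : k) := by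
    rw [liftAlternating_apply_ιMulti, Pi.single_eq_same]
    have hM : (Matrix.of v : Matrix (Fin (2 * n)) (Fin (2 * n)) k) =
        (1 : Matrix (Fin (2 * n)) (Fin (2 * n)) k).submatrix (auxPerm n) id := by
      funext i j
      rw [hv]
      simp [Matrix.one_apply, Pi.single_apply, Matrix.submatrix_apply, eq_comm]
    show (Matrix.of v).det = _
    rw [hM, Matrix.det_permute, Matrix.det_one, mul_one]
  intro hzero
  rw [key] at hzero
  have hres := congrArg (liftAlternating
      (Pi.single (2 * n) (Matrix.detRowAlternating : (Fin (2 * n) → k) [⋀^Fin (2 * n)]→ₗ[k] k)))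
    hzero
  rw [map_zero, map_nsmul, hprod, hφ] at hres
  have hsign : ((Equiv.Perm.sign (auxPerm n) : ℤ) : k) ≠ 0 :=
    Int.cast_ne_zero.mpr (Units.ne_zero _)
  have hfac : (n.factorial : k) ≠ 0 := Nat.cast_ne_zero.mpr (Nat.factorial_pos n).ne'
  rw [nsmul_eq_mul] at hres
  exact (mul_ne_zero hfac hsign) hres
end

section
/- In A_q, for every integer s ≥ 1 one has v^s u^s = ∏_{i=1}^{s} (q^i · uv + [i]_q), where [i]_q = 1 + q + ⋯ + q^{i−1}; the factors q^i · uv + [i]_q pairwise commute, being polynomials in uv, so the product is unambiguous. -/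
/-- The defining relation of the quantum Weyl algebra `A_q = k⟨u,v⟩/(vu − q·uv − 1)`:
`vu` is identified with `q·uv + 1`. -/
inductive QuantumWeylRel (k : Type*) [Field k] (q : k) :
    FreeAlgebra k (Fin 2) → FreeAlgebra k (Fin 2) → Prop
  | rel : QuantumWeylRel k q
      (FreeAlgebra.ι k 1 * FreeAlgebra.ι k 0)
      (q • (FreeAlgebra.ι k 0 * FreeAlgebra.ι k 1) + 1)

/-- Lemma 6.7 (computation): in `A_q`, for every `s ≥ 1` one has
`v^s u^s = ∏_{i=1}^s (q^i · uv + [i]_q)` where `[i]_q = 1 + q + ⋯ + q^{i-1}`.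
The product is taken in increasing order of `i` (the factors pairwise commute). -/
theorem quantumWeyl_vs_us_prod
    (k : Type*) [Field k] [IsAlgClosed k] [CharZero k] (q : k) (hq : q ≠ 0)
    (u v : RingQuot (QuantumWeylRel k q))
    (hu : u = RingQuot.mkAlgHom k (QuantumWeylRel k q) (FreeAlgebra.ι k 0))
    (hv : v = RingQuot.mkAlgHom k (QuantumWeylRel k q) (FreeAlgebra.ι k 1)) :
    ∀ s : ℕ, 1 ≤ s →
      v ^ s * u ^ s =
        ((List.range s).map (fun i =>
          (q ^ (i + 1)) • (u * v) + (∑ j ∈ Finset.range (i + 1), q ^ j) • 1)).prod := by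
  set w : RingQuot (QuantumWeylRel k q) := u * v with hw
  -- the defining relation in the quotient
  have hvu : v * u = q • w + 1 := by
    have h := RingQuot.mkAlgHom_rel k (QuantumWeylRel.rel (k := k) (q := q))
    rw [map_mul, map_add, map_smul, map_mul, map_one] at h
    rw [hu, hv, hw, hu, hv]
    exact h
  set f : ℕ → RingQuot (QuantumWeylRel k q) :=
    fun i => (q ^ (i + 1)) • (u * v) + (∑ j ∈ Finset.range (i + 1), q ^ j) • 1 with hf
  -- commutation of the factors
  have hcomm : ∀ a b c d : k,
      (a • w + b • (1 : RingQuot (QuantumWeylRel k q))) * (c • w + d • 1)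
        = (c • w + d • 1) * (a • w + b • 1) := by
    intro a b c d
    simp only [add_mul, mul_add, smul_mul_smul_comm, mul_one, one_mul]
    ring_nf
    abel
  have hfw : ∀ i, f i = (q ^ (i + 1)) • w + (∑ j ∈ Finset.range (i + 1), q ^ j) • 1 := by
    intro i; rw [hf]
  -- moving v across a factor
  have hvf : ∀ i, v * f i = f (i + 1) * v := by
    intro i
    rw [hfw, hfw]
    have hvw : v * w = (q • w + 1) * v := by
      rw [hw, ← mul_assoc, hvu]
    calc v * ((q ^ (i + 1)) • w + (∑ j ∈ Finset.range (i + 1), q ^ j) • 1)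
        = (q ^ (i + 1)) • (v * w) + (∑ j ∈ Finset.range (i + 1), q ^ j) • v := by
          simp [mul_add, mul_smul_comm]
      _ = (q ^ (i + 2)) • (w * v) + (q ^ (i + 1)) • v
            + (∑ j ∈ Finset.range (i + 1), q ^ j) • v := by
          rw [hvw]
          simp only [add_mul, smul_mul_assoc, one_mul, smul_add, smul_smul, ← pow_succ]
      _ = ((q ^ (i + 1 + 1)) • w + (∑ j ∈ Finset.range (i + 1 + 1), q ^ j) • 1) * v := by
          rw [Finset.sum_range_succ _ (i + 1)]
          simp only [add_mul, smul_mul_assoc, one_mul, add_smul]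
          module
  -- moving v across a product of factors
  have hvl : ∀ l : List ℕ, v * (l.map f).prod = (l.map (fun i => f (i + 1))).prod * v := by
    intro l
    induction l with
    | nil => simp
    | cons a l ih =>
      simp only [List.map_cons, List.prod_cons]
      rw [← mul_assoc, hvf, mul_assoc, ih, ← mul_assoc]
  -- f 0 commutes with shifted products
  have hf0 : ∀ l : List ℕ,
      (l.map (fun i => f (i + 1))).prod * f 0 = f 0 * (l.map (fun i => f (i + 1))).prod := by
    intro l
    refine (Commute.list_prod_right _ _ ?_).symm.eq
    intro y hy
    simp only [List.mem_map] at hy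
    obtain ⟨i, _, rfl⟩ := hy
    rw [Commute, SemiconjBy, hfw, hfw]
    exact (hcomm _ _ _ _)
  have main : ∀ s : ℕ, v ^ s * u ^ s = ((List.range s).map f).prod := by
    intro s
    induction s with
    | zero => simp
    | succ n ih =>
      have h1 : v ^ (n + 1) * u ^ (n + 1) = v * (v ^ n * u ^ n) * u := by
        rw [pow_succ' v, pow_succ u]
        simp [mul_assoc]
      rw [h1, ih, hvl, mul_assoc, hvu]
      have hf00 : (q : k) • w + 1 = f 0 := by
        rw [hfw]
        simp
      rw [hw] at hf00
      rw [hf00, hf0, List.range_succ_eq_map, List.map_cons, List.prod_cons, List.map_map]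
      rfl
  intro s _
  exact main s
end

section
/- If q is a root of unity of order n ≥ 2 (that is, q^n = 1 and q^i ≠ 1 for 1 ≤ i < n), then the elements u^n and v^n are central in A. -/
/-- Auxiliary commutation lemma: from `b·a = s•(a·b) + t•1` deduce the
commutation of `b` past powers of `a`. -/
theorem qweyl_aux_comm {k : Type*} [Field k] {A : Type*} [Ring A] [Algebra k A]
    (a b : A) (s t : k) (h : b * a = s • (a * b) + t • (1 : A)) :
    ∀ m : ℕ, b * a ^ (m + 1)
      = s ^ (m + 1) • (a ^ (m + 1) * b) + ((∑ i ∈ Finset.range (m + 1), s ^ i) * t) • a ^ m := by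
  intro m
  induction m with
  | zero => simpa using h
  | succ m ih =>
    have h1 : b * a ^ (m + 2) = (b * a ^ (m + 1)) * a := by
      rw [pow_succ, ← mul_assoc]
    rw [h1, ih, add_mul, smul_mul_assoc, smul_mul_assoc, mul_assoc, h]
    rw [mul_add, mul_smul_comm, mul_smul_comm, mul_one]
    rw [show a ^ (m+1) * (a * b) = a ^ (m+2) * b by rw [← mul_assoc, ← pow_succ]]
    rw [show a ^ m * a = a ^ (m+1) from (pow_succ a m).symm]
    match_scalars <;> simp [Finset.sum_range_succ] <;> ring

/-- The defining relation of `A = k⟨u,v⟩/(vu − q·uv − c)`: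
`vu` is identified with `q·uv + c`. -/
inductive QWeylRel (k : Type*) [Field k] (q c : k) :
    FreeAlgebra k (Fin 2) → FreeAlgebra k (Fin 2) → Prop
  | rel : QWeylRel k q c
      (FreeAlgebra.ι k 1 * FreeAlgebra.ι k 0)
      (q • (FreeAlgebra.ι k 0 * FreeAlgebra.ι k 1) + algebraMap k (FreeAlgebra k (Fin 2)) c)

/-- Lemma 2.9 (computation): if `q` is a root of unity of order `n ≥ 2`, then `u^n` and
`v^n` are central in `A = k⟨u,v⟩/(vu − q·uv − c)`. -/
theorem quantumWeyl_un_vn_central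
    (k : Type*) [Field k] [IsAlgClosed k] [CharZero k] (q c : k) (hq0 : q ≠ 0)
    (n : ℕ) (hn : 2 ≤ n) (hqn : q ^ n = 1)
    (hq' : ∀ i : ℕ, 1 ≤ i → i < n → q ^ i ≠ 1)
    (u v : RingQuot (QWeylRel k q c))
    (hu : u = RingQuot.mkAlgHom k (QWeylRel k q c) (FreeAlgebra.ι k 0))
    (hv : v = RingQuot.mkAlgHom k (QWeylRel k q c) (FreeAlgebra.ι k 1)) :
    u ^ n ∈ Set.center (RingQuot (QWeylRel k q c)) ∧
      v ^ n ∈ Set.center (RingQuot (QWeylRel k q c)) := by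
  have hq1 : q ≠ 1 := by
    intro h
    exact hq' 1 le_rfl (by omega) (by simpa using h)
  -- the defining relation in the quotient
  have hrel : v * u = q • (u * v) + c • (1 : RingQuot (QWeylRel k q c)) := by
    have := RingQuot.mkAlgHom_rel k (QWeylRel.rel (k := k) (q := q) (c := c))
    rw [hu, hv]
    simpa [map_mul, map_add, Algebra.algebraMap_eq_smul_one] using this
  -- reversed relation
  have hrel' : u * v = q⁻¹ • (v * u) + (-(q⁻¹ * c)) • (1 : RingQuot (QWeylRel k q c)) := by
    rw [hrel]
    match_scalars <;> field_simp <;> ring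
  obtain ⟨m, rfl⟩ : ∃ m, n = m + 1 := ⟨n - 1, by omega⟩
  -- the geometric sums vanish
  have hsum : ∑ i ∈ Finset.range (m + 1), q ^ i = 0 := by
    rw [geom_sum_eq hq1, hqn, sub_self, zero_div]
  have hqi1 : q⁻¹ ≠ 1 := fun h => hq1 (by rw [← inv_inv q, h, inv_one])
  have hqin : (q⁻¹) ^ (m + 1) = 1 := by
    rw [inv_pow, hqn, inv_one]
  have hsum' : ∑ i ∈ Finset.range (m + 1), (q⁻¹) ^ i = 0 := by
    rw [geom_sum_eq hqi1, hqin, sub_self, zero_div]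
  -- key commutations
  have hvu : v * u ^ (m + 1) = u ^ (m + 1) * v := by
    rw [qweyl_aux_comm u v q c hrel m, hqn, hsum, one_smul, zero_mul, zero_smul, add_zero]
  have huv : u * v ^ (m + 1) = v ^ (m + 1) * u := by
    rw [qweyl_aux_comm v u q⁻¹ (-(q⁻¹ * c)) hrel' m, hqin, hsum', one_smul, zero_mul,
      zero_smul, add_zero]
  -- an element commuting with `u` and `v` is central
  have central : ∀ z : RingQuot (QWeylRel k q c),
      u * z = z * u → v * z = z * v → z ∈ Set.center (RingQuot (QWeylRel k q c)) := by
    intro z h0 h1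
    rw [Semigroup.mem_center_iff]
    intro g
    obtain ⟨y, rfl⟩ := RingQuot.mkAlgHom_surjective k (QWeylRel k q c) g
    induction y using FreeAlgebra.induction with
    | grade0 r =>
      rw [AlgHom.commutes]
      exact Algebra.commutes r z
    | grade1 i =>
      fin_cases i
      · rw [hu] at h0; exact h0
      · rw [hv] at h1; exact h1
    | mul a b ha hb =>
      rw [map_mul, mul_assoc, hb, ← mul_assoc, ha, mul_assoc]
    | add a b ha hb =>
      rw [map_add, add_mul, mul_add, ha, hb]
  constructor
  · apply central
    · rw [← pow_succ', ← pow_succ]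
    · rw [hvu]
  · apply central
    · rw [huv]
    · rw [← pow_succ', ← pow_succ]
end

section
/- If q is a root of unity of order n ≥ 2 (that is, q^n = 1 and q^i ≠ 1 for 1 ≤ i < n), then A is a finitely generated module over its center. -/
section Generic

variable {K R : Type*} [CommRing K] [Ring R] [Algebra K R]

/-- Move `y` across a power of `x` using a `q`-commutation relation. -/
lemma qw_aux1 (x y : R) (s t : K)
    (h : y * x = s • (x * y) + algebraMap K R t) (m : ℕ) :
    y * x ^ (m + 1) =
      s ^ (m + 1) • (x ^ (m + 1) * y)
        + (t * ∑ i ∈ Finset.range (m + 1), s ^ i) • x ^ m := by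
  induction m with
  | zero => simpa [Algebra.algebraMap_eq_smul_one] using h
  | succ m ih =>
    have key : y * x ^ (m + 2)
        = s ^ (m + 1) • (x ^ (m + 1) * (y * x))
          + (t * ∑ i ∈ Finset.range (m + 1), s ^ i) • x ^ (m + 1) := by
      rw [pow_succ, ← mul_assoc, ih, add_mul, smul_mul_assoc, smul_mul_assoc,
        mul_assoc, ← pow_succ]
    rw [key, h]
    simp only [mul_add, mul_smul_comm, Algebra.algebraMap_eq_smul_one, mul_one,
      smul_add, smul_smul, ← mul_assoc, ← pow_succ, Finset.sum_range_succ,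
      mul_add, add_smul]
    match_scalars <;> ring

/-- Move a power of `y` across `x` using a `q`-commutation relation. -/
lemma qw_aux2 (x y : R) (s t : K)
    (h : y * x = s • (x * y) + algebraMap K R t) (m : ℕ) :
    y ^ (m + 1) * x =
      s ^ (m + 1) • (x * y ^ (m + 1))
        + (t * ∑ i ∈ Finset.range (m + 1), s ^ i) • y ^ m := by
  induction m with
  | zero => simpa [Algebra.algebraMap_eq_smul_one] using h
  | succ m ih =>
    have key : y ^ (m + 2) * x
        = s ^ (m + 1) • (y * x * y ^ (m + 1))
          + (t * ∑ i ∈ Finset.range (m + 1), s ^ i) • y ^ (m + 1) := by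
      rw [pow_succ', mul_assoc, ih, mul_add, mul_smul_comm, mul_smul_comm,
        ← mul_assoc, ← pow_succ']
    rw [key, h]
    simp only [add_mul, smul_mul_assoc, Algebra.algebraMap_eq_smul_one, one_mul,
      smul_add, smul_smul, mul_assoc, ← pow_succ', Finset.sum_range_succ,
      mul_add, add_smul]
    match_scalars <;> ring

end Generic

section Aux

variable {k : Type*} [Field k] (q c : k)

/-- The image of the first generator in the quantum Weyl algebra. -/
noncomputable def qwU : RingQuot (QWeylRel k q c) :=
  RingQuot.mkAlgHom k (QWeylRel k q c) (FreeAlgebra.ι k 0)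

/-- The image of the second generator in the quantum Weyl algebra. -/
noncomputable def qwV : RingQuot (QWeylRel k q c) :=
  RingQuot.mkAlgHom k (QWeylRel k q c) (FreeAlgebra.ι k 1)

lemma qw_rel :
    qwV q c * qwU q c
      = q • (qwU q c * qwV q c) + algebraMap k (RingQuot (QWeylRel k q c)) c := by
  have := RingQuot.mkAlgHom_rel k (QWeylRel.rel (k := k) (q := q) (c := c))
  simpa [qwU, qwV, map_mul, map_add, map_smul, AlgHom.commutes] using this

lemma qw_gen (P : RingQuot (QWeylRel k q c) → Prop)
    (h0 : ∀ a : k, P (algebraMap k _ a)) (hu : P (qwU q c)) (hv : P (qwV q c))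
    (hmul : ∀ x y, P x → P y → P (x * y)) (hadd : ∀ x y, P x → P y → P (x + y)) :
    ∀ x, P x := by
  intro x
  obtain ⟨a, rfl⟩ := RingQuot.mkAlgHom_surjective k (QWeylRel k q c) x
  induction a with
  | grade0 r => rw [AlgHom.commutes]; exact h0 r
  | grade1 i =>
    fin_cases i
    · exact hu
    · exact hv
  | mul a b ha hb => rw [map_mul]; exact hmul _ _ ha hb
  | add a b ha hb => rw [map_add]; exact hadd _ _ ha hb

end Aux

/-- Lemma 2.9: if `q` is a root of unity of order `n ≥ 2`, then
`A = k⟨u,v⟩/(vu − q·uv − c)` is a finitely generated module over its center. -/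
theorem quantumWeyl_module_finite_over_center
    (k : Type*) [Field k] [IsAlgClosed k] [CharZero k] (q c : k) (hq0 : q ≠ 0)
    (n : ℕ) (hn : 2 ≤ n) (hqn : q ^ n = 1)
    (hq' : ∀ i : ℕ, 1 ≤ i → i < n → q ^ i ≠ 1) :
    Module.Finite (Subring.center (RingQuot (QWeylRel k q c)))
      (RingQuot (QWeylRel k q c)) := by
  set A := RingQuot (QWeylRel k q c) with hA
  set u : A := qwU q c with hu
  set v : A := qwV q c with hv
  have hrel : v * u = q • (u * v) + algebraMap k A c := qw_rel q c
  have hq1 : q ≠ 1 := by simpa using hq' 1 le_rfl (by omega)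
  have hSq : ∑ i ∈ Finset.range n, q ^ i = 0 := by
    rw [geom_sum_eq hq1, hqn, sub_self, zero_div]
  have hq1' : q⁻¹ ≠ 1 := by simpa [inv_eq_one] using hq1
  have hqn' : q⁻¹ ^ n = 1 := by rw [inv_pow, hqn, inv_one]
  have hSq' : ∑ i ∈ Finset.range n, q⁻¹ ^ i = 0 := by
    rw [geom_sum_eq hq1', hqn', sub_self, zero_div]
  have hrel2 : u * v = q⁻¹ • (v * u) + algebraMap k A (-(q⁻¹ * c)) := by
    have h1 : q⁻¹ • (v * u) = u * v + algebraMap k A (q⁻¹ * c) := by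
      rw [hrel, smul_add, smul_smul, inv_mul_cancel₀ hq0, one_smul,
        Algebra.algebraMap_eq_smul_one, Algebra.algebraMap_eq_smul_one, smul_smul]
    rw [h1, map_neg]
    abel
  obtain ⟨m, rfl⟩ : ∃ m, n = m + 1 := ⟨n - 1, by omega⟩
  have hvu : v * u ^ (m + 1) = u ^ (m + 1) * v := by
    rw [qw_aux1 u v q c hrel m, hqn, hSq, one_smul, mul_zero, zero_smul, add_zero]
  have huv : u * v ^ (m + 1) = v ^ (m + 1) * u := by
    rw [qw_aux1 v u q⁻¹ (-(q⁻¹ * c)) hrel2 m, hqn', hSq', one_smul, mul_zero,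
      zero_smul, add_zero]
  -- `u ^ n` and `v ^ n` are central
  have hucen : u ^ (m + 1) ∈ Subring.center A := by
    rw [Subring.mem_center_iff]
    refine qw_gen q c (fun g => g * u ^ (m + 1) = u ^ (m + 1) * g)
      (fun a => ?_) ?_ ?_ (fun x y hx hy => ?_) (fun x y hx hy => ?_)
    · exact Algebra.commutes a _
    · show u * u ^ (m + 1) = u ^ (m + 1) * u
      rw [← pow_succ', ← pow_succ]
    · exact hvu
    · rw [mul_assoc, hy, ← mul_assoc, hx, mul_assoc]
    · rw [add_mul, hx, hy, mul_add]
  have hvcen : v ^ (m + 1) ∈ Subring.center A := by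
    rw [Subring.mem_center_iff]
    refine qw_gen q c (fun g => g * v ^ (m + 1) = v ^ (m + 1) * g)
      (fun a => ?_) ?_ ?_ (fun x y hx hy => ?_) (fun x y hx hy => ?_)
    · exact Algebra.commutes a _
    · exact huv
    · show v * v ^ (m + 1) = v ^ (m + 1) * v
      rw [← pow_succ', ← pow_succ]
    · rw [mul_assoc, hy, ← mul_assoc, hx, mul_assoc]
    · rw [add_mul, hx, hy, mul_add]
  set n := m + 1 with hn'
  set Z := Subring.center A with hZ
  set f : Fin n × Fin n → A := fun p => u ^ (p.1 : ℕ) * v ^ (p.2 : ℕ) with hf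
  set M : Submodule Z A := Submodule.span Z (Set.range f) with hM
  have hsmul : ∀ (z : Z) (x : A), z • x = (z : A) * x := fun z x => by
    rw [Subring.smul_def, smul_eq_mul]
  have hmem : ∀ i j : ℕ, i < n → j < n → u ^ i * v ^ j ∈ M :=
    fun i j hi hj => Submodule.subset_span ⟨(⟨i, hi⟩, ⟨j, hj⟩), rfl⟩
  have hMzmul : ∀ z ∈ Z, ∀ x ∈ M, z * x ∈ M := by
    intro z hz x hx
    have := M.smul_mem (⟨z, hz⟩ : Z) hx
    rwa [hsmul] at this
  have hMsmulk : ∀ (a : k), ∀ x ∈ M, a • x ∈ M := by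
    intro a x hx
    rw [Algebra.smul_def]
    exact hMzmul _ (Subring.mem_center_iff.2 fun g => (Algebra.commutes a g).symm) x hx
  have hpow_u : ∀ j : ℕ, j < n → u ^ n * v ^ j ∈ M := by
    intro j hj
    have := hMzmul _ hucen _ (hmem 0 j (by omega) hj)
    simpa [← mul_assoc] using this
  have hpow_v : ∀ i : ℕ, i < n → u ^ i * v ^ n ∈ M := by
    intro i hi
    have hcomm : u ^ i * v ^ n = v ^ n * u ^ i :=
      Subring.mem_center_iff.1 hvcen (u ^ i)
    have := hMzmul _ hvcen _ (hmem i 0 hi (by omega))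
    rw [hcomm]
    simpa using this
  have step_u : ∀ i j : ℕ, i < n → j < n → (u ^ i * v ^ j) * u ∈ M := by
    intro i j hi hj
    rcases j with _ | j'
    · rw [pow_zero, mul_one, ← pow_succ]
      rcases Nat.lt_or_ge (i + 1) n with h | h
      · simpa using hmem (i + 1) 0 h (by omega)
      · have h' : i + 1 = n := by omega
        rw [h']
        simpa using hpow_u 0 (by omega)
    · rw [mul_assoc, qw_aux2 u v q c hrel j', mul_add, mul_smul_comm, mul_smul_comm,
        ← mul_assoc, ← pow_succ]
      refine M.add_mem (hMsmulk _ _ ?_) (hMsmulk _ _ (hmem i j' hi (by omega)))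
      rcases Nat.lt_or_ge (i + 1) n with h | h
      · exact hmem (i + 1) (j' + 1) h hj
      · have h' : i + 1 = n := by omega
        rw [h']
        exact hpow_u (j' + 1) hj
  have step_v : ∀ i j : ℕ, i < n → j < n → (u ^ i * v ^ j) * v ∈ M := by
    intro i j hi hj
    rw [mul_assoc, ← pow_succ]
    rcases Nat.lt_or_ge (j + 1) n with h | h
    · exact hmem i (j + 1) hi h
    · have h' : j + 1 = n := by omega
      rw [h']
      exact hpow_v i hi
  have hMu : ∀ x ∈ M, x * u ∈ M := by
    intro x hx
    induction hx using Submodule.span_induction with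
    | mem x hxS =>
      obtain ⟨⟨i, j⟩, rfl⟩ := hxS
      exact step_u i j i.isLt j.isLt
    | zero => rw [zero_mul]; exact M.zero_mem
    | add x y hx hy ihx ihy => rw [add_mul]; exact M.add_mem ihx ihy
    | smul z x hx ih =>
      rw [hsmul, mul_assoc]
      exact hMzmul _ z.2 _ ih
  have hMv : ∀ x ∈ M, x * v ∈ M := by
    intro x hx
    induction hx using Submodule.span_induction with
    | mem x hxS =>
      obtain ⟨⟨i, j⟩, rfl⟩ := hxS
      exact step_v i j i.isLt j.isLt
    | zero => rw [zero_mul]; exact M.zero_mem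
    | add x y hx hy ihx ihy => rw [add_mul]; exact M.add_mem ihx ihy
    | smul z x hx ih =>
      rw [hsmul, mul_assoc]
      exact hMzmul _ z.2 _ ih
  have hM1 : (1 : A) ∈ M := by simpa using hmem 0 0 (by omega) (by omega)
  have hall : ∀ x : A, ∀ y ∈ M, y * x ∈ M := by
    refine qw_gen q c (fun x => ∀ y ∈ M, y * x ∈ M)
      (fun a y hy => ?_) hMu hMv (fun x₁ x₂ h₁ h₂ y hy => ?_) (fun x₁ x₂ h₁ h₂ y hy => ?_)
    · rw [← Algebra.commutes, ← Algebra.smul_def]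
      exact hMsmulk a y hy
    · rw [← mul_assoc]
      exact h₂ _ (h₁ _ hy)
    · rw [mul_add]
      exact M.add_mem (h₁ _ hy) (h₂ _ hy)
  classical
  refine ⟨⟨Finset.univ.image f, ?_⟩⟩
  rw [Finset.coe_image, Finset.coe_univ, Set.image_univ]
  rw [eq_top_iff]
  intro x _
  simpa using hall x 1 hM1
end

section
/- Let m ≥ 2, let ξ ∈ k be a primitive m-th root of unity, and let σ be a k-algebra automorphism of R with σ(u) = u and σ(v) = ξ v. Then the fixed subring R^σ = {x ∈ R : σ(x) = x} equals the k-subalgebra of R generated by u and v^m. -/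
/-- The defining relation of `R = k⟨u,v⟩/(vu − uv − v)`: `vu` is identified with `uv + v`. -/
inductive JordanWeylRel (k : Type*) [Field k] :
    FreeAlgebra k (Fin 2) → FreeAlgebra k (Fin 2) → Prop
  | rel : JordanWeylRel k
      (FreeAlgebra.ι k 1 * FreeAlgebra.ι k 0)
      (FreeAlgebra.ι k 0 * FreeAlgebra.ι k 1 + FreeAlgebra.ι k 1)

set_option maxHeartbeats 1000000 in
/-- Proposition 3.3 (computation of the fixed ring): if `σ` is the algebra automorphism
of `R = k⟨u,v⟩/(vu − uv − v)` with `σ(u) = u`, `σ(v) = ξ v` for `ξ` a primitive `m`-th root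
of unity, then the fixed subring `R^σ` is the subalgebra generated by `u` and `v^m`. -/
theorem jordanWeyl_fixed_ring
    (k : Type*) [Field k] [IsAlgClosed k] [CharZero k]
    (u v : RingQuot (JordanWeylRel k))
    (hu : u = RingQuot.mkAlgHom k (JordanWeylRel k) (FreeAlgebra.ι k 0))
    (hv : v = RingQuot.mkAlgHom k (JordanWeylRel k) (FreeAlgebra.ι k 1))
    (m : ℕ) (hm : 2 ≤ m) (ξ : k) (hξ : IsPrimitiveRoot ξ m)
    (σ : RingQuot (JordanWeylRel k) ≃ₐ[k] RingQuot (JordanWeylRel k))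
    (hσu : σ u = u) (hσv : σ v = ξ • v) :
    ∀ x : RingQuot (JordanWeylRel k),
      σ x = x ↔ x ∈ Algebra.adjoin k ({u, v ^ m} : Set (RingQuot (JordanWeylRel k))) := by
  have hmk : (m : k) ≠ 0 := Nat.cast_ne_zero.2 (by omega)
  have hξm : ξ ^ m = 1 := hξ.pow_eq_one
  -- the defining relation
  have hrel : v * u = u * v + v := by
    rw [hu, hv, ← map_mul, ← map_mul, ← map_add]
    exact RingQuot.mkAlgHom_rel k JordanWeylRel.rel
  -- σ fixes the subalgebra generated by u
  have hfixu : ∀ f ∈ Algebra.adjoin k ({u} : Set (RingQuot (JordanWeylRel k))), σ f = f := by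
    intro f hf
    induction hf using Algebra.adjoin_induction with
    | mem x hx => obtain rfl : x = u := hx; exact hσu
    | algebraMap r => exact σ.commutes r
    | add x y _ _ hx hy => rw [map_add, hx, hy]
    | mul x y _ _ hx hy => rw [map_mul, hx, hy]
  have hσvm : σ (v ^ m) = v ^ m := by
    rw [map_pow, hσv, smul_pow, hξm, one_smul]
  -- easy direction: A ⊆ fixed ring
  have easy : ∀ x ∈ Algebra.adjoin k ({u, v ^ m} : Set (RingQuot (JordanWeylRel k))),
      σ x = x := by
    intro x hx
    induction hx using Algebra.adjoin_induction with
    | mem x hx =>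
      rcases hx with rfl | hx
      · exact hσu
      · obtain rfl : x = v ^ m := hx; exact hσvm
    | algebraMap r => exact σ.commutes r
    | add x y _ _ hx hy => rw [map_add, hx, hy]
    | mul x y _ _ hx hy => rw [map_mul, hx, hy]
  -- key commutation: v^b * u = (u + b) * v^b
  have hvbu : ∀ b : ℕ, v ^ b * u = (u + (b : RingQuot (JordanWeylRel k))) * v ^ b := by
    intro b
    induction b with
    | zero => simp
    | succ b ih =>
      have h1 : v ^ (b + 1) * u = v ^ b * (v * u) := by
        rw [pow_succ, mul_assoc]
      rw [h1, hrel, mul_add, ← mul_assoc, ih, mul_assoc, ← pow_succ]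
      push_cast
      noncomm_ring
  -- moving a member of k[u] across v^b
  have hswap : ∀ (b : ℕ), ∀ g ∈ Algebra.adjoin k ({u} : Set (RingQuot (JordanWeylRel k))),
      ∃ h ∈ Algebra.adjoin k ({u} : Set (RingQuot (JordanWeylRel k))), v ^ b * g = h * v ^ b := by
    intro b g hg
    induction hg using Algebra.adjoin_induction with
    | mem x hx =>
      have hxu : x = u := hx
      rw [hxu]
      refine ⟨u + (b : RingQuot (JordanWeylRel k)), ?_, hvbu b⟩
      exact add_mem (Algebra.subset_adjoin (Set.mem_singleton u)) (Subalgebra.natCast_mem _ b)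
    | algebraMap r =>
      exact ⟨algebraMap k _ r, Subalgebra.algebraMap_mem _ r, by rw [Algebra.commutes]⟩
    | add x y _ _ hx hy =>
      obtain ⟨h₁, hh₁, e₁⟩ := hx
      obtain ⟨h₂, hh₂, e₂⟩ := hy
      exact ⟨h₁ + h₂, add_mem hh₁ hh₂, by rw [mul_add, e₁, e₂, add_mul]⟩
    | mul x y _ _ hx hy =>
      obtain ⟨h₁, hh₁, e₁⟩ := hx
      obtain ⟨h₂, hh₂, e₂⟩ := hy
      refine ⟨h₁ * h₂, mul_mem hh₁ hh₂, ?_⟩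
      rw [← mul_assoc, e₁, mul_assoc, e₂, ← mul_assoc]
  -- the spanning set of normal "monomials" f * v^b with f ∈ k[u]
  have hSmul : ∀ x ∈ {x : RingQuot (JordanWeylRel k) |
        ∃ f ∈ Algebra.adjoin k ({u} : Set (RingQuot (JordanWeylRel k))), ∃ b : ℕ, x = f * v ^ b},
      ∀ y ∈ {x : RingQuot (JordanWeylRel k) |
        ∃ f ∈ Algebra.adjoin k ({u} : Set (RingQuot (JordanWeylRel k))), ∃ b : ℕ, x = f * v ^ b},
      x * y ∈ {x : RingQuot (JordanWeylRel k) |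
        ∃ f ∈ Algebra.adjoin k ({u} : Set (RingQuot (JordanWeylRel k))), ∃ b : ℕ, x = f * v ^ b} := by
    rintro _ ⟨f, hf, b, rfl⟩ _ ⟨g, hg, d, rfl⟩
    obtain ⟨h, hh, e⟩ := hswap b g hg
    refine ⟨f * h, mul_mem hf hh, b + d, ?_⟩
    calc f * v ^ b * (g * v ^ d)
        = f * (v ^ b * g * v ^ d) := by rw [mul_assoc, ← mul_assoc (v ^ b)]
      _ = f * (h * v ^ b * v ^ d) := by rw [e]
      _ = f * h * v ^ (b + d) := by rw [pow_add, mul_assoc f, mul_assoc h]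
  have hspanmul : Submodule.span k {x : RingQuot (JordanWeylRel k) |
        ∃ f ∈ Algebra.adjoin k ({u} : Set (RingQuot (JordanWeylRel k))), ∃ b : ℕ, x = f * v ^ b}
      * Submodule.span k {x : RingQuot (JordanWeylRel k) |
        ∃ f ∈ Algebra.adjoin k ({u} : Set (RingQuot (JordanWeylRel k))), ∃ b : ℕ, x = f * v ^ b}
      ≤ Submodule.span k {x : RingQuot (JordanWeylRel k) |
        ∃ f ∈ Algebra.adjoin k ({u} : Set (RingQuot (JordanWeylRel k))), ∃ b : ℕ, x = f * v ^ b} := by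
    rw [Submodule.span_mul_span]
    refine Submodule.span_le.2 ?_
    rintro _ ⟨x, hx, y, hy, rfl⟩
    exact Submodule.subset_span (hSmul x hx y hy)
  have hone : (1 : RingQuot (JordanWeylRel k)) ∈ {x : RingQuot (JordanWeylRel k) |
      ∃ f ∈ Algebra.adjoin k ({u} : Set (RingQuot (JordanWeylRel k))), ∃ b : ℕ, x = f * v ^ b} :=
    ⟨1, one_mem _, 0, by simp⟩
  -- every element of R lies in the span of the monomials
  have hspan : ∀ x : RingQuot (JordanWeylRel k), x ∈ Submodule.span k
      {x : RingQuot (JordanWeylRel k) |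
        ∃ f ∈ Algebra.adjoin k ({u} : Set (RingQuot (JordanWeylRel k))), ∃ b : ℕ, x = f * v ^ b} := by
    intro x
    obtain ⟨y, rfl⟩ := RingQuot.mkAlgHom_surjective k (JordanWeylRel k) x
    induction y using FreeAlgebra.induction with
    | grade0 r =>
      rw [AlgHom.commutes, Algebra.algebraMap_eq_smul_one]
      exact Submodule.smul_mem _ r (Submodule.subset_span hone)
    | grade1 i =>
      fin_cases i
      · refine Submodule.subset_span ⟨u, Algebra.subset_adjoin (Set.mem_singleton u), 0, ?_⟩
        show RingQuot.mkAlgHom k (JordanWeylRel k) (FreeAlgebra.ι k 0) = u * v ^ 0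
        rw [pow_zero, mul_one, hu]
      · refine Submodule.subset_span ⟨1, one_mem _, 1, ?_⟩
        show RingQuot.mkAlgHom k (JordanWeylRel k) (FreeAlgebra.ι k 1) = 1 * v ^ 1
        rw [pow_one, one_mul, hv]
    | mul a b ha hb =>
      rw [map_mul]
      exact hspanmul (Submodule.mul_mem_mul ha hb)
    | add a b ha hb =>
      rw [map_add]
      exact Submodule.add_mem _ ha hb
  -- eigenvalue computation on monomials
  have hσmono : ∀ f ∈ Algebra.adjoin k ({u} : Set (RingQuot (JordanWeylRel k))), ∀ b : ℕ,
      σ (f * v ^ b) = ξ ^ b • (f * v ^ b) := by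
    intro f hf b
    rw [map_mul, hfixu f hf, map_pow, hσv, smul_pow, mul_smul_comm]
  have hσtmono : ∀ (t : ℕ), ∀ f ∈ Algebra.adjoin k ({u} : Set (RingQuot (JordanWeylRel k))),
      ∀ b : ℕ, (σ ^ t) (f * v ^ b) = (ξ ^ b) ^ t • (f * v ^ b) := by
    intro t
    induction t with
    | zero => intro f hf b; simp
    | succ t ih =>
      intro f hf b
      rw [pow_succ', AlgEquiv.mul_apply, ih f hf b, map_smul, hσmono f hf b,
        smul_smul, pow_succ, mul_comm]
  -- the averaged element lands in A
  have hemem : ∀ x : RingQuot (JordanWeylRel k),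
      (m : k)⁻¹ • (∑ t ∈ Finset.range m, (σ ^ t) x)
        ∈ Algebra.adjoin k ({u, v ^ m} : Set (RingQuot (JordanWeylRel k))) := by
    intro x
    induction hspan x using Submodule.span_induction with
    | mem x hx =>
      obtain ⟨f, hf, b, rfl⟩ := hx
      have hsum : (∑ t ∈ Finset.range m, (σ ^ t) (f * v ^ b))
          = (∑ t ∈ Finset.range m, (ξ ^ b) ^ t) • (f * v ^ b) := by
        rw [Finset.sum_smul]
        exact Finset.sum_congr rfl fun t _ => hσtmono t f hf b
      rw [hsum]
      by_cases hdvd : m ∣ b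
      · obtain ⟨q, rfl⟩ := hdvd
        have h1 : ξ ^ (m * q) = 1 := by rw [pow_mul, hξm, one_pow]
        have h2 : (∑ t ∈ Finset.range m, (ξ ^ (m * q)) ^ t) = (m : k) := by
          simp [h1]
        rw [h2, smul_smul, inv_mul_cancel₀ hmk, one_smul]
        have hfA : f ∈ Algebra.adjoin k ({u, v ^ m} : Set (RingQuot (JordanWeylRel k))) :=
          Algebra.adjoin_mono (by simp) hf
        have hvA : v ^ (m * q) ∈ Algebra.adjoin k
            ({u, v ^ m} : Set (RingQuot (JordanWeylRel k))) := by
          rw [pow_mul]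
          have h1 : v ^ m ∈ ({u, v ^ m} : Set (RingQuot (JordanWeylRel k))) :=
            Set.mem_insert_of_mem u (Set.mem_singleton _)
          exact pow_mem (Algebra.subset_adjoin h1) q
        exact mul_mem hfA hvA
      · have hne : ξ ^ b ≠ 1 := fun h => hdvd ((hξ.pow_eq_one_iff_dvd b).1 h)
        have hzm : (ξ ^ b) ^ m = 1 := by
          rw [← pow_mul, mul_comm, pow_mul, hξm, one_pow]
        have h2 : (∑ t ∈ Finset.range m, (ξ ^ b) ^ t) = 0 := by
          rw [geom_sum_eq hne, hzm, sub_self, zero_div]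
        rw [h2, zero_smul, smul_zero]
        exact zero_mem _
    | zero =>
      simp only [map_zero, Finset.sum_const, smul_zero, Finset.card_range]
      exact zero_mem _
    | add x y _ _ hx hy =>
      have h3 : (∑ t ∈ Finset.range m, (σ ^ t) (x + y))
          = (∑ t ∈ Finset.range m, (σ ^ t) x) + ∑ t ∈ Finset.range m, (σ ^ t) y := by
        rw [← Finset.sum_add_distrib]
        exact Finset.sum_congr rfl fun t _ => map_add _ _ _
      rw [h3, smul_add]
      exact add_mem hx hy
    | smul a x _ hx =>
      have h3 : (∑ t ∈ Finset.range m, (σ ^ t) (a • x))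
          = a • ∑ t ∈ Finset.range m, (σ ^ t) x := by
        rw [Finset.smul_sum]
        exact Finset.sum_congr rfl fun t _ => map_smul _ _ _
      rw [h3, smul_comm]
      exact Subalgebra.smul_mem _ hx a
  -- conclusion
  intro x
  constructor
  · intro hfix
    have ht : ∀ t : ℕ, (σ ^ t) x = x := by
      intro t
      induction t with
      | zero => simp
      | succ t ih => rw [pow_succ', AlgEquiv.mul_apply, ih, hfix]
    have hx := hemem x
    have hsum : (∑ t ∈ Finset.range m, (σ ^ t) x) = (m : k) • x := by
      rw [Finset.sum_congr rfl fun t _ => ht t, Finset.sum_const,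
        Finset.card_range, Nat.cast_smul_eq_nsmul]
    rwa [hsum, smul_smul, inv_mul_cancel₀ hmk, one_smul] at hx
  · exact easy x
end

section
/- Let m ≥ 2, let ξ ∈ k be a primitive m-th root of unity, and let σ be a k-algebra automorphism of A_q with σ(u) = ξ u and σ(v) = ξ⁻¹ v. Then the fixed subring A_q^σ = {x ∈ A_q : σ(x) = x} equals the k-subalgebra of A_q generated by u^m, v^m, and uv. -/
open Finset in
lemma aux_vu_pow {k A : Type*} [Field k] [Ring A] [Algebra k A] {q : k} {u v : A}
    (hrel : v * u = q • (u * v) + 1) :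
    ∀ j : ℕ, v * u ^ (j + 1)
      = q ^ (j + 1) • (u ^ (j + 1) * v) + (∑ t ∈ range (j + 1), q ^ t) • u ^ j := by
  intro j
  induction j with
  | zero => simpa using hrel
  | succ j ih =>
    have : v * u ^ (j + 2) = (v * u ^ (j + 1)) * u := by
      rw [mul_assoc, ← pow_succ]
    rw [this, ih, add_mul, smul_mul_assoc, smul_mul_assoc, mul_assoc, hrel]
    rw [mul_add, mul_smul_comm, mul_one, ← mul_assoc, ← pow_succ, smul_add, smul_smul,
      ← pow_succ, ← pow_succ]
    have hsum : ∑ t ∈ range (j + 1 + 1), q ^ t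
        = (∑ t ∈ range (j + 1), q ^ t) + q ^ (j + 1) := Finset.sum_range_succ _ _
    rw [hsum]
    module

open Finset in
lemma aux_uvpow_mem {k A : Type*} [Field k] [Ring A] [Algebra k A] {q : k} (hq : q ≠ 0)
    {u v : A} (hrel : v * u = q • (u * v) + 1) :
    ∀ j : ℕ, u ^ j * v ^ j ∈ Algebra.adjoin k ({u * v} : Set A) := by
  have key : ∀ j : ℕ, u ^ (j+1) * v ^ (j+1) ∈ Algebra.adjoin k ({u * v} : Set A) := by
    intro j
    induction j with
    | zero => simpa using Algebra.subset_adjoin (Set.mem_singleton (u*v))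
    | succ j ih =>
      have huv : u * v ∈ Algebra.adjoin k ({u * v} : Set A) :=
        Algebra.subset_adjoin (Set.mem_singleton _)
      set c : k := ∑ t ∈ range (j + 1), q ^ t with hc
      have h1 : (u * v) * (u ^ (j+1) * v ^ (j+1))
          = q ^ (j+1) • (u ^ (j+2) * v ^ (j+2)) + c • (u ^ (j+1) * v ^ (j+1)) := by
        rw [show (u*v)*(u^(j+1)*v^(j+1)) = u * (v * u^(j+1)) * v^(j+1) by noncomm_ring,
          aux_vu_pow hrel j, ← hc]
        simp only [mul_add, add_mul, mul_smul_comm, smul_mul_assoc, mul_assoc, pow_succ']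
      have h2 : u ^ (j+2) * v ^ (j+2)
          = (q ^ (j+1))⁻¹ • ((u * v) * (u ^ (j+1) * v ^ (j+1)) - c • (u ^ (j+1) * v ^ (j+1))) := by
        rw [h1, add_sub_cancel_right, smul_smul, inv_mul_cancel₀ (pow_ne_zero _ hq), one_smul]
      rw [h2]
      exact Subalgebra.smul_mem _ (sub_mem (mul_mem huv ih) (Subalgebra.smul_mem _ ih _)) _
  intro j
  cases j with
  | zero => simpa using Subalgebra.one_mem _
  | succ j => exact key j

lemma aux_span_top {k : Type*} [Field k] {q : k}
    (u v : RingQuot (QuantumWeylRel k q))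
    (hu : u = RingQuot.mkAlgHom k (QuantumWeylRel k q) (FreeAlgebra.ι k 0))
    (hv : v = RingQuot.mkAlgHom k (QuantumWeylRel k q) (FreeAlgebra.ι k 1))
    (hrel : v * u = q • (u * v) + 1) :
    ∀ y, y ∈ Submodule.span k
      (Set.range fun p : ℕ × ℕ => u ^ p.1 * v ^ p.2) := by
  set S := Submodule.span k (Set.range fun p : ℕ × ℕ =>
    u ^ p.1 * v ^ p.2) with hS
  have hmem : ∀ i j : ℕ, u ^ i * v ^ j ∈ S :=
    fun i j => Submodule.subset_span ⟨(i, j), rfl⟩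
  have hLu : ∀ y ∈ S, u * y ∈ S := by
    intro y hy
    induction hy using Submodule.span_induction with
    | mem x hx =>
      obtain ⟨⟨i, j⟩, rfl⟩ := hx
      rw [← mul_assoc, ← pow_succ']
      exact hmem _ _
    | zero => simp
    | add a b _ _ ha hb => rw [mul_add]; exact add_mem ha hb
    | smul c a _ ha => rw [mul_smul_comm]; exact Submodule.smul_mem _ _ ha
  have hLv : ∀ y ∈ S, v * y ∈ S := by
    intro y hy
    induction hy using Submodule.span_induction with
    | mem x hx =>
      obtain ⟨⟨i, j⟩, rfl⟩ := hx
      cases i with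
      | zero =>
        simpa [pow_succ'] using hmem 0 (j+1)
      | succ i =>
        rw [← mul_assoc, aux_vu_pow hrel i, add_mul, smul_mul_assoc, smul_mul_assoc,
          mul_assoc, ← pow_succ']
        exact add_mem (Submodule.smul_mem _ _ (hmem _ _)) (Submodule.smul_mem _ _ (hmem _ _))
    | zero => simp
    | add a b _ _ ha hb => rw [mul_add]; exact add_mem ha hb
    | smul c a _ ha => rw [mul_smul_comm]; exact Submodule.smul_mem _ _ ha
  have hLup : ∀ (n : ℕ) (y), y ∈ S → u ^ n * y ∈ S := by
    intro n
    induction n with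
    | zero => intro y hy; simpa using hy
    | succ n ih =>
      intro y hy
      rw [pow_succ, mul_assoc]
      exact ih _ (hLu y hy)
  have hLvp : ∀ (n : ℕ) (y), y ∈ S → v ^ n * y ∈ S := by
    intro n
    induction n with
    | zero => intro y hy; simpa using hy
    | succ n ih =>
      intro y hy
      rw [pow_succ, mul_assoc]
      exact ih _ (hLv y hy)
  have hmul : ∀ x ∈ S, ∀ y ∈ S, x * y ∈ S := by
    intro x hx
    induction hx using Submodule.span_induction with
    | mem x hx =>
      obtain ⟨⟨i, j⟩, rfl⟩ := hx
      intro y hy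
      rw [mul_assoc]
      exact hLup i _ (hLvp j y hy)
    | zero => intro y hy; simp
    | add a b _ _ ha hb => intro y hy; rw [add_mul]; exact add_mem (ha y hy) (hb y hy)
    | smul c a _ ha => intro y hy; rw [smul_mul_assoc]; exact Submodule.smul_mem _ _ (ha y hy)
  have h1 : (1 : RingQuot (QuantumWeylRel k q)) ∈ S := by simpa using hmem 0 0
  intro y
  obtain ⟨a, rfl⟩ := RingQuot.mkAlgHom_surjective k (QuantumWeylRel k q) y
  induction a using FreeAlgebra.induction with
  | grade0 r =>
    rw [AlgHom.commutes, Algebra.algebraMap_eq_smul_one]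
    exact Submodule.smul_mem _ _ h1
  | grade1 x =>
    match x with
    | 0 => rw [← hu]; simpa using hmem 1 0
    | 1 => rw [← hv]; simpa using hmem 0 1
  | mul a b ha hb => rw [map_mul]; exact hmul _ ha _ hb
  | add a b ha hb => rw [map_add]; exact add_mem ha hb

/-- Lemma 6.7 (computation of the fixed ring): if `σ` is the algebra automorphism of `A_q`
with `σ(u) = ξ u`, `σ(v) = ξ⁻¹ v` for `ξ` a primitive `m`-th root of unity, then the fixed
subring `A_q^σ` is the subalgebra generated by `u^m`, `v^m` and `uv`. -/
theorem quantumWeyl_fixed_ring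
    (k : Type*) [Field k] [IsAlgClosed k] [CharZero k] (q : k) (hq : q ≠ 0)
    (u v : RingQuot (QuantumWeylRel k q))
    (hu : u = RingQuot.mkAlgHom k (QuantumWeylRel k q) (FreeAlgebra.ι k 0))
    (hv : v = RingQuot.mkAlgHom k (QuantumWeylRel k q) (FreeAlgebra.ι k 1))
    (m : ℕ) (hm : 2 ≤ m) (ξ : k) (hξ : IsPrimitiveRoot ξ m)
    (σ : RingQuot (QuantumWeylRel k q) ≃ₐ[k] RingQuot (QuantumWeylRel k q))
    (hσu : σ u = ξ • u) (hσv : σ v = ξ⁻¹ • v) :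
    ∀ x : RingQuot (QuantumWeylRel k q),
      σ x = x ↔
        x ∈ Algebra.adjoin k ({u ^ m, v ^ m, u * v} : Set (RingQuot (QuantumWeylRel k q))) := by
  have hrel : v * u = q • (u * v) + 1 := by
    have h := RingQuot.mkAlgHom_rel k (QuantumWeylRel.rel (k := k) (q := q))
    rw [hu, hv]
    simpa only [map_mul, map_add, map_smul, map_one] using h
  have hξ0 : ξ ≠ 0 := by
    intro h
    have h1 := hξ.pow_eq_one
    rw [h, zero_pow (by omega : m ≠ 0)] at h1
    exact zero_ne_one h1
  set M := Algebra.adjoin k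
    ({u ^ m, v ^ m, u * v} : Set (RingQuot (QuantumWeylRel k q))) with hM
  -- membership of monomials with m ∣ i - j
  have hsub : ({u * v} : Set (RingQuot (QuantumWeylRel k q))) ⊆ {u ^ m, v ^ m, u * v} := by
    intro z hz
    rw [Set.mem_singleton_iff] at hz
    subst hz
    simp
  have hmono : ∀ i j : ℕ, (m : ℤ) ∣ ((i : ℤ) - j) → u ^ i * v ^ j ∈ M := by
    intro i j hd
    rcases le_total j i with h | h
    · have h' : (m : ℤ) ∣ (((i - j : ℕ) : ℤ)) := by
        rwa [Int.ofNat_sub h]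
      have hdd : m ∣ i - j := Int.natCast_dvd_natCast.mp h'
      obtain ⟨a, ha⟩ := hdd
      have hi : i = m * a + j := by omega
      rw [hi, pow_add, pow_mul, mul_assoc]
      exact mul_mem (pow_mem (Algebra.subset_adjoin (by simp)) a)
        (Algebra.adjoin_mono hsub (aux_uvpow_mem hq hrel j))
    · have h'' : (m : ℤ) ∣ ((j : ℤ) - i) := by
        have := dvd_neg.mpr hd
        rwa [neg_sub] at this
      have h' : (m : ℤ) ∣ (((j - i : ℕ) : ℤ)) := by
        rwa [Int.ofNat_sub h]
      have hdd : m ∣ j - i := Int.natCast_dvd_natCast.mp h'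
      obtain ⟨a, ha⟩ := hdd
      have hj : j = i + m * a := by omega
      rw [hj, pow_add, pow_mul, ← mul_assoc]
      exact mul_mem (Algebra.adjoin_mono hsub (aux_uvpow_mem hq hrel i))
        (pow_mem (Algebra.subset_adjoin (by simp)) a)
  -- eigenvalue computation
  have hσmono : ∀ i j : ℕ, σ (u ^ i * v ^ j) = ξ ^ ((i : ℤ) - j) • (u ^ i * v ^ j) := by
    intro i j
    rw [map_mul, map_pow, map_pow, hσu, hσv, smul_pow, smul_pow, smul_mul_smul_comm]
    congr 1
    rw [inv_pow, ← zpow_natCast ξ i, ← zpow_natCast ξ j, ← zpow_neg, ← zpow_add₀ hξ0,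
      ← sub_eq_add_neg]
  have hiter_smul : ∀ (t : ℕ) (c : k) y, (⇑σ)^[t] (c • y) = c • (⇑σ)^[t] y := by
    intro t
    induction t with
    | zero => intro c y; simp
    | succ t ih => intro c y; rw [Function.iterate_succ_apply, map_smul, ih, ← Function.iterate_succ_apply]
  have hiter_add : ∀ (t : ℕ) a b, (⇑σ)^[t] (a + b) = (⇑σ)^[t] a + (⇑σ)^[t] b := by
    intro t
    induction t with
    | zero => intro a b; simp
    | succ t ih => intro a b; rw [Function.iterate_succ_apply, map_add, ih, ← Function.iterate_succ_apply, ← Function.iterate_succ_apply]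
  have hiter_zero : ∀ t : ℕ, (⇑σ)^[t] (0 : RingQuot (QuantumWeylRel k q)) = 0 :=
    fun t => Function.iterate_fixed (map_zero σ) t
  have hiter_mono : ∀ (t i j : ℕ),
      (⇑σ)^[t] (u ^ i * v ^ j) = (ξ ^ ((i : ℤ) - j)) ^ t • (u ^ i * v ^ j) := by
    intro t i j
    induction t with
    | zero => simp
    | succ t ih =>
      rw [Function.iterate_succ_apply, hσmono, hiter_smul, ih, smul_smul, ← pow_succ']
  intro x
  constructor
  · -- forward direction
    intro hx
    have hxS := aux_span_top u v hu hv hrel x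
    have key : (∑ t ∈ Finset.range m, (⇑σ)^[t] x) ∈ Subalgebra.toSubmodule M := by
      clear hx
      induction hxS using Submodule.span_induction with
      | mem y hy =>
        obtain ⟨⟨i, j⟩, rfl⟩ := hy
        have hsum : ∑ t ∈ Finset.range m, (⇑σ)^[t] (u ^ i * v ^ j)
            = (∑ t ∈ Finset.range m, (ξ ^ ((i : ℤ) - j)) ^ t) • (u ^ i * v ^ j) := by
          rw [Finset.sum_smul]
          exact Finset.sum_congr rfl fun t _ => hiter_mono t i j
        show (∑ t ∈ Finset.range m, (⇑σ)^[t] (u ^ i * v ^ j)) ∈ Subalgebra.toSubmodule M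
        rw [hsum]
        by_cases hd : (m : ℤ) ∣ ((i : ℤ) - j)
        · have hw1 : ξ ^ ((i : ℤ) - j) = 1 := (hξ.zpow_eq_one_iff_dvd _).mpr hd
          rw [hw1]
          simp only [one_pow, Finset.sum_const, Finset.card_range, nsmul_eq_mul, mul_one]
          exact Submodule.smul_mem _ _ ((Subalgebra.mem_toSubmodule M).mpr (hmono i j hd))
        · have hw : ξ ^ ((i : ℤ) - j) ≠ 1 := fun h => hd ((hξ.zpow_eq_one_iff_dvd _).mp h)
          have hwm : (ξ ^ ((i : ℤ) - j)) ^ m = 1 := by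
            rw [← zpow_natCast (ξ ^ ((i : ℤ) - j)) m, ← zpow_mul, mul_comm, zpow_mul,
              zpow_natCast, hξ.pow_eq_one, one_zpow]
          rw [geom_sum_eq hw, hwm, sub_self, zero_div, zero_smul]
          exact Submodule.zero_mem _
      | zero => simp [hiter_zero]
      | add a b _ _ iha ihb =>
        have : ∑ t ∈ Finset.range m, (⇑σ)^[t] (a + b)
            = (∑ t ∈ Finset.range m, (⇑σ)^[t] a) + ∑ t ∈ Finset.range m, (⇑σ)^[t] b := by
          rw [← Finset.sum_add_distrib]
          exact Finset.sum_congr rfl fun t _ => hiter_add t a b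
        rw [this]
        exact add_mem iha ihb
      | smul c a _ iha =>
        have : ∑ t ∈ Finset.range m, (⇑σ)^[t] (c • a)
            = c • ∑ t ∈ Finset.range m, (⇑σ)^[t] a := by
          rw [Finset.smul_sum]
          exact Finset.sum_congr rfl fun t _ => hiter_smul t c a
        rw [this]
        exact Submodule.smul_mem _ _ iha
    have hfix : ∑ t ∈ Finset.range m, (⇑σ)^[t] x = (m : k) • x := by
      rw [Finset.sum_congr rfl fun t _ => Function.iterate_fixed hx t,
        Finset.sum_const, Finset.card_range, ← Nat.cast_smul_eq_nsmul k m x]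
    rw [hfix] at key
    have hm0 : (m : k) ≠ 0 := Nat.cast_ne_zero.mpr (by omega)
    have hxeq : x = (m : k)⁻¹ • ((m : k) • x) := by
      rw [smul_smul, inv_mul_cancel₀ hm0, one_smul]
    have : x ∈ Subalgebra.toSubmodule M := by
      rw [hxeq]
      exact Submodule.smul_mem _ _ key
    exact (Subalgebra.mem_toSubmodule M).mp this
  · -- reverse direction
    intro hx
    have hle : M ≤ AlgHom.equalizer (σ : RingQuot (QuantumWeylRel k q) →ₐ[k] _)
        (AlgHom.id k (RingQuot (QuantumWeylRel k q))) := by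
      rw [hM, Algebra.adjoin_le_iff]
      intro y hy
      simp only [Set.mem_insert_iff, Set.mem_singleton_iff] at hy
      rcases hy with rfl | rfl | rfl
      · show σ (u ^ m) = u ^ m
        rw [map_pow, hσu, smul_pow, hξ.pow_eq_one, one_smul]
      · show σ (v ^ m) = v ^ m
        rw [map_pow, hσv, smul_pow, inv_pow, hξ.pow_eq_one, inv_one, one_smul]
      · show σ (u * v) = u * v
        rw [map_mul, hσu, hσv, smul_mul_smul_comm, mul_inv_cancel₀ hξ0, one_smul]
    exact hle hx
end

section
/- Let σ be a k-algebra automorphism of R of finite order with σ ≠ id which maps the k-subspace k·1 + k·u + k·v into itself. Then there exist a root of unity ξ ∈ k with ξ ≠ 1 and a scalar β ∈ k such that σ(v) = ξ v and σ(u) = u + β v. -/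
noncomputable def jwRep (k : Type*) [Field k] :
    RingQuot (JordanWeylRel k) →ₐ[k] Matrix (Fin 2) (Fin 2) k :=
  RingQuot.liftAlgHom k ⟨FreeAlgebra.lift k ![!![0,0;0,1], !![0,1;0,0]], by
    rintro x y ⟨⟩
    simp only [map_mul, map_add, FreeAlgebra.lift_ι_apply]
    ext i j
    fin_cases i <;> fin_cases j <;>
      simp [Matrix.mul_apply, Fin.sum_univ_two]⟩


/-- Corollary 5.9(b) (computation): any finite-order filtration-preserving algebra
automorphism `σ ≠ id` of `R = k⟨u,v⟩/(vu − uv − v)` satisfies `σ(v) = ξ v` for a root of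
unity `ξ ≠ 1`, and `σ(u) = u + β v` for some `β ∈ k`. -/
theorem jordanWeyl_automorphism_form
    (k : Type*) [Field k] [IsAlgClosed k] [CharZero k]
    (u v : RingQuot (JordanWeylRel k))
    (hu : u = RingQuot.mkAlgHom k (JordanWeylRel k) (FreeAlgebra.ι k 0))
    (hv : v = RingQuot.mkAlgHom k (JordanWeylRel k) (FreeAlgebra.ι k 1))
    (σ : RingQuot (JordanWeylRel k) ≃ₐ[k] RingQuot (JordanWeylRel k))
    (hfin : ∃ n : ℕ, 1 ≤ n ∧ σ ^ n = 1) (hne : σ ≠ 1)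
    (hσ : ∀ x ∈ Submodule.span k ({1, u, v} : Set (RingQuot (JordanWeylRel k))),
      σ x ∈ Submodule.span k ({1, u, v} : Set (RingQuot (JordanWeylRel k)))) :
    ∃ ξ β : k, (∃ m : ℕ, 1 ≤ m ∧ ξ ^ m = 1) ∧ ξ ≠ 1 ∧ σ v = ξ • v ∧ σ u = u + β • v := by
  have hrepu : jwRep k u = !![0,0;0,1] := by
    rw [hu]; simp [jwRep, RingQuot.liftAlgHom_mkAlgHom_apply]
  have hrepv : jwRep k v = !![0,1;0,0] := by
    rw [hv]; simp [jwRep, RingQuot.liftAlgHom_mkAlgHom_apply]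
  -- coefficient extraction (linear independence of 1, u, v)
  have coeff : ∀ p q r : k, p•(1:RingQuot (JordanWeylRel k)) + q•u + r•v = 0 →
      p = 0 ∧ q = 0 ∧ r = 0 := by
    intro p q r h
    have h' := congrArg (jwRep k) h
    simp only [map_add, map_smul, map_one, map_zero, hrepu, hrepv] at h'
    have h00 := congrArg (fun X => X 0 0) h'
    have h01 := congrArg (fun X => X 0 1) h'
    have h11 := congrArg (fun X => X 1 1) h'
    simp [Matrix.one_apply] at h00 h01 h11
    refine ⟨h00, ?_, h01⟩
    rw [h00] at h11; simpa using h11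
  have extract : ∀ x : RingQuot (JordanWeylRel k),
      x ∈ Submodule.span k ({1, u, v} : Set (RingQuot (JordanWeylRel k))) →
      ∃ p q r : k, x = p•1 + q•u + r•v := by
    intro x hx
    rw [Submodule.mem_span_insert] at hx
    obtain ⟨p, z, hz, rfl⟩ := hx
    rw [Submodule.mem_span_pair] at hz
    obtain ⟨q, r, rfl⟩ := hz
    exact ⟨p, q, r, (add_assoc _ _ _).symm⟩
  obtain ⟨a, b, c, hσu⟩ := extract _ (hσ u (Submodule.subset_span (by simp)))
  obtain ⟨d, e, f, hσv⟩ := extract _ (hσ v (Submodule.subset_span (by simp)))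
  have hrel : v * u = u * v + v := by
    rw [hu, hv, ← map_mul, ← map_mul, ← map_add]
    exact RingQuot.mkAlgHom_rel k JordanWeylRel.rel
  have key : σ v * σ u = σ u * σ v + σ v := by
    have := congrArg σ hrel
    simpa [map_mul, map_add] using this
  have hMσu : jwRep k (σ u) = !![a, c; 0, a+b] := by
    rw [hσu]; simp only [map_add, map_smul, map_one, hrepu, hrepv]
    ext i j; fin_cases i <;> fin_cases j <;> simp [Matrix.one_apply]
  have hMσv : jwRep k (σ v) = !![d, f; 0, d+e] := by
    rw [hσv]; simp only [map_add, map_smul, map_one, hrepu, hrepv]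
    ext i j; fin_cases i <;> fin_cases j <;> simp [Matrix.one_apply]
  have keyM := congrArg (jwRep k) key
  simp only [map_mul, map_add, hMσu, hMσv] at keyM
  have E00 := congrArg (fun X => X 0 0) keyM
  have E01 := congrArg (fun X => X 0 1) keyM
  have E11 := congrArg (fun X => X 1 1) keyM
  simp [Matrix.mul_apply, Fin.sum_univ_two] at E00 E01 E11
  have hd : d = 0 := by linear_combination -E00
  have he : e = 0 := by linear_combination E00 - E11
  have hσv' : σ v = f • v := by rw [hσv, hd, he]; simp
  have hv0 : v ≠ 0 := by
    intro h0
    rw [h0, map_zero] at hrepv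
    have := congrArg (fun X => X 0 1) hrepv
    simp at this
  have hf0 : f ≠ 0 := by
    intro h
    apply hv0
    apply σ.injective
    simp [hσv', h]
  have hb : b = 1 := by
    have : f * b = f * 1 := by rw [mul_one]; linear_combination E01 - hd * c + c * hd + c * he
    exact mul_left_cancel₀ hf0 this
  have hσu' : σ u = a • 1 + u + c • v := by rw [hσu, hb, one_smul]
  obtain ⟨n, hn1, hnσ⟩ := hfin
  have pow_v : ∀ m : ℕ, (σ ^ m) v = (f ^ m) • v := by
    intro m
    induction m with
    | zero => simp
    | succ m ih =>
      rw [pow_succ', AlgEquiv.mul_apply, ih, map_smul, hσv', smul_smul, pow_succ]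
  have pow_u : ∀ m : ℕ, (σ ^ m) u =
      ((m : k) * a) • 1 + u + (c * ∑ i ∈ Finset.range m, f ^ i) • v := by
    intro m
    induction m with
    | zero => simp
    | succ m ih =>
      rw [pow_succ', AlgEquiv.mul_apply, ih, map_add, map_add, map_smul, map_smul,
        map_one, hσu', hσv', geom_sum_succ, Nat.cast_succ]
      module
  have hvn : (f ^ n) • v = v := by rw [← pow_v n, hnσ]; simp
  have hfn : f ^ n = 1 := by
    have h' : f ^ n • v - v = 0 := by rw [hvn]; exact sub_self v
    have h0 : (0:k)•(1:RingQuot (JordanWeylRel k)) + (0:k)•u + (f^n - 1)•v = 0 := by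
      calc (0:k)•(1:RingQuot (JordanWeylRel k)) + (0:k)•u + (f^n - 1)•v
          = f ^ n • v - v := by module
        _ = 0 := h'
    have := (coeff _ _ _ h0).2.2
    exact sub_eq_zero.mp this
  have hun : ((n:k)*a)•(1:RingQuot (JordanWeylRel k)) + u
      + (c * ∑ i ∈ Finset.range n, f ^ i)•v = u := by
    rw [← pow_u n, hnσ]; simp
  have h0 : ((n:k)*a)•(1:RingQuot (JordanWeylRel k)) + (0:k)•u
      + (c * ∑ i ∈ Finset.range n, f ^ i)•v = 0 := by
    have : ((n:k)*a)•(1:RingQuot (JordanWeylRel k)) + (0:k)•u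
        + (c * ∑ i ∈ Finset.range n, f ^ i)•v
        = (((n:k)*a)•(1:RingQuot (JordanWeylRel k)) + u
          + (c * ∑ i ∈ Finset.range n, f ^ i)•v) - u := by module
    rw [this, hun, sub_self]
  obtain ⟨hna, -, hcS⟩ := coeff _ _ _ h0
  have hNa : (n:k) ≠ 0 := Nat.cast_ne_zero.mpr (by omega)
  have ha : a = 0 := by
    rcases mul_eq_zero.mp hna with h | h
    · exact absurd h hNa
    · exact h
  have hfne1 : f ≠ 1 := by
    intro h1
    rw [h1] at hcS
    simp at hcS
    have hc : c = 0 := by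
      rcases hcS with h | h
      · exact h
      · omega
    apply hne
    have h1u : σ u = u := by rw [hσu', ha, hc]; simp
    have h1v : σ v = v := by rw [hσv', h1, one_smul]
    have hcomp : (σ : RingQuot (JordanWeylRel k) →ₐ[k] RingQuot (JordanWeylRel k)).comp
        (RingQuot.mkAlgHom k (JordanWeylRel k)) = RingQuot.mkAlgHom k (JordanWeylRel k) := by
      apply FreeAlgebra.hom_ext
      funext i
      fin_cases i
      · simpa [← hu] using h1u
      · simpa [← hv] using h1v
    apply AlgEquiv.ext
    intro x
    obtain ⟨y, rfl⟩ := RingQuot.mkAlgHom_surjective k (JordanWeylRel k) x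
    have := AlgHom.congr_fun hcomp y
    simpa using this
  exact ⟨f, c, ⟨n, hn1, hfn⟩, hfne1, hσv', by rw [hσu', ha]; simp⟩
end

section
/- Let σ be a k-algebra automorphism of R′ of finite order with σ ≠ id which maps the k-subspace k·1 + k·u + k·v into itself. Then σ has order 2, σ(u) = −u, and σ(v) = −v + δ·1 for some scalar δ ∈ k. -/
open Polynomial

/-- The defining relation of `R′ = k⟨u,v⟩/(vu − uv − u² − 1)`:
`vu` is identified with `uv + u² + 1`. -/
inductive JordanDeformRel (k : Type*) [Field k] :
    FreeAlgebra k (Fin 2) → FreeAlgebra k (Fin 2) → Prop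
  | rel : JordanDeformRel k
      (FreeAlgebra.ι k 1 * FreeAlgebra.ι k 0)
      (FreeAlgebra.ι k 0 * FreeAlgebra.ι k 1 + FreeAlgebra.ι k 0 * FreeAlgebra.ι k 0 + 1)

noncomputable section JDAux

variable {k : Type*} [Field k]

/-- Multiplication by `X` on `k[X]`. -/
def jdU : Module.End k (Polynomial k) := LinearMap.mulLeft k (X : k[X])

/-- The operator `(X² + 1) d/dX` on `k[X]`. -/
def jdV : Module.End k (Polynomial k) :=
  (LinearMap.mulLeft k ((X : k[X])^2 + 1)).comp (derivative : k[X] →ₗ[k] k[X])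

lemma jdU_apply (f : k[X]) : jdU f = X * f := rfl
lemma jdV_apply (f : k[X]) : jdV f = (X^2+1) * derivative f := rfl

lemma jd_rel_holds : (jdV : Module.End k k[X]) * jdU = jdU * jdV + jdU * jdU + 1 := by
  apply LinearMap.ext; intro f
  simp only [Module.End.mul_apply, LinearMap.add_apply, Module.End.one_apply,
    jdU_apply, jdV_apply, derivative_mul, derivative_X]
  ring

/-- The representation of `R′` on `k[X]`. -/
def jdPhi : RingQuot (JordanDeformRel k) →ₐ[k] Module.End k (Polynomial k) :=
  RingQuot.liftAlgHom k ⟨FreeAlgebra.lift k ![jdU, jdV], by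
    rintro x y ⟨⟩
    simp only [map_mul, map_add, map_one, FreeAlgebra.lift_ι_apply,
      Matrix.cons_val_zero, Matrix.cons_val_one, Matrix.head_cons]
    exact jd_rel_holds⟩

lemma jdPhi_u :
    jdPhi (RingQuot.mkAlgHom k (JordanDeformRel k) (FreeAlgebra.ι k 0)) = (jdU : Module.End k k[X]) := by
  simp [jdPhi, RingQuot.liftAlgHom_mkAlgHom_apply]

lemma jdPhi_v :
    jdPhi (RingQuot.mkAlgHom k (JordanDeformRel k) (FreeAlgebra.ι k 1)) = (jdV : Module.End k k[X]) := by
  simp [jdPhi, RingQuot.liftAlgHom_mkAlgHom_apply]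

/-- Generic image of a filtration-one element under the representation. -/
def jdP (a b c : k) : Module.End k (Polynomial k) := a • 1 + b • jdU + c • jdV

lemma jdP_apply (a b c : k) (f : k[X]) :
    jdP a b c f = C a * f + C b * (X * f) + C c * ((X^2+1) * derivative f) := by
  simp only [jdP, LinearMap.add_apply, LinearMap.smul_apply, Module.End.one_apply,
    jdU_apply, jdV_apply, smul_eq_C_mul]

lemma jd_coeffs_eq {l0 l1 l2 l3 l4 : k}
    (h : C l0 + C l1 * X + C l2 * X^2 + C l3 * X^3 + C l4 * X^4 = 0) :
    l0 = 0 ∧ l1 = 0 ∧ l2 = 0 ∧ l3 = 0 ∧ l4 = 0 := by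
  refine ⟨?_, ?_, ?_, ?_, ?_⟩
  · simpa using congrArg (fun p => coeff p 0) h
  · simpa using congrArg (fun p => coeff p 1) h
  · simpa using congrArg (fun p => coeff p 2) h
  · simpa using congrArg (fun p => coeff p 3) h
  · simpa using congrArg (fun p => coeff p 4) h

lemma jd_scalar_facts [CharZero k] (a b c a' b' c' : k)
    (h : jdP a' b' c' * jdP a b c
       = jdP a b c * jdP a' b' c' + jdP a b c * jdP a b c + 1) :
    c = 0 ∧ a * b = 0 ∧ b * c' = a ^ 2 + 1 ∧ b * c' = b ^ 2 := by
  have h1 := LinearMap.congr_fun h (1 : k[X])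
  have h3 := LinearMap.congr_fun h (X * X : k[X])
  simp only [Module.End.mul_apply, LinearMap.add_apply, Module.End.one_apply, jdP_apply,
    derivative_add, derivative_mul, derivative_one, derivative_X, derivative_C,
    derivative_X_pow, derivative_zero, map_ofNat, Nat.cast_ofNat, Nat.reduceSub, pow_one,
    mul_zero, zero_mul, add_zero, zero_add, map_zero] at h1 h3
  have H1 : C (b*c' - c*b' - b*c - a*a - 1) + C (-(2*a*b)) * X
      + C (b*c' - c*b' - b*c - b*b) * X^2 + C (0:k) * X^3 + C (0:k) * X^4 = 0 := by
    simp only [map_sub, map_add, map_mul, map_one, map_neg, map_zero, map_ofNat]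
    linear_combination h1
  have H3 : C (-(2*(c*c))) + C (-(4*(a*c))) * X
      + C (b*c' - c*b' - 8*(c*c) - 5*(b*c) - a*a - 1) * X^2
      + C (-(4*(a*c)) - 2*(a*b)) * X^3
      + C (b*c' - c*b' - 6*(c*c) - 5*(b*c) - b*b) * X^4 = 0 := by
    simp only [map_sub, map_add, map_mul, map_one, map_neg, map_zero, map_ofNat]
    linear_combination h3
  obtain ⟨e10, e11, e12, -, -⟩ := jd_coeffs_eq H1
  obtain ⟨e30, -, -, -, -⟩ := jd_coeffs_eq H3
  have two : (2:k) ≠ 0 := two_ne_zero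
  have hc : c = 0 := by
    have h2 : (2:k) * (c * c) = 0 := by linear_combination -e30
    exact mul_self_eq_zero.mp ((mul_eq_zero.mp h2).resolve_left two)
  have hab : a * b = 0 := by
    have h2 : (2:k) * (a * b) = 0 := by linear_combination -e11
    exact (mul_eq_zero.mp h2).resolve_left two
  refine ⟨hc, hab, ?_, ?_⟩
  · subst hc; linear_combination e10
  · subst hc; linear_combination e12

lemma jd_alghom_ext (f g : RingQuot (JordanDeformRel k) →ₐ[k] RingQuot (JordanDeformRel k))
    (h0 : f (RingQuot.mkAlgHom k (JordanDeformRel k) (FreeAlgebra.ι k 0))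
        = g (RingQuot.mkAlgHom k (JordanDeformRel k) (FreeAlgebra.ι k 0)))
    (h1 : f (RingQuot.mkAlgHom k (JordanDeformRel k) (FreeAlgebra.ι k 1))
        = g (RingQuot.mkAlgHom k (JordanDeformRel k) (FreeAlgebra.ι k 1))) : f = g := by
  apply RingQuot.ringQuot_ext'
  apply FreeAlgebra.hom_ext
  funext i
  fin_cases i
  · simpa using h0
  · simpa using h1

lemma jd_relA :
    (RingQuot.mkAlgHom k (JordanDeformRel k) (FreeAlgebra.ι k 1))
      * (RingQuot.mkAlgHom k (JordanDeformRel k) (FreeAlgebra.ι k 0))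
    = (RingQuot.mkAlgHom k (JordanDeformRel k) (FreeAlgebra.ι k 0))
        * (RingQuot.mkAlgHom k (JordanDeformRel k) (FreeAlgebra.ι k 1))
      + (RingQuot.mkAlgHom k (JordanDeformRel k) (FreeAlgebra.ι k 0))
        * (RingQuot.mkAlgHom k (JordanDeformRel k) (FreeAlgebra.ι k 0)) + 1 := by
  have := RingQuot.mkAlgHom_rel k (JordanDeformRel.rel (k := k))
  simpa only [map_mul, map_add, map_one] using this

lemma jd_u_ne_smul_one (a : k) :
    RingQuot.mkAlgHom k (JordanDeformRel k) (FreeAlgebra.ι k 0)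
      ≠ a • (1 : RingQuot (JordanDeformRel k)) := by
  intro h
  have h2 := congrArg jdPhi h
  rw [jdPhi_u, map_smul, map_one] at h2
  have h3 := LinearMap.congr_fun h2 1
  simp only [jdU_apply, mul_one, LinearMap.smul_apply, Module.End.one_apply,
    smul_eq_C_mul] at h3
  exact X_ne_C a (by simpa using h3)

lemma jd_u_ne_zero :
    RingQuot.mkAlgHom k (JordanDeformRel k) (FreeAlgebra.ι k 0)
      ≠ (0 : RingQuot (JordanDeformRel k)) := by
  intro h
  have h2 := congrArg jdPhi h
  rw [jdPhi_u, map_zero] at h2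
  have h3 := LinearMap.congr_fun h2 1
  simp only [jdU_apply, mul_one, LinearMap.zero_apply] at h3
  exact X_ne_zero h3

end JDAux

/-- Corollary 5.9(c) (computation): any finite-order filtration-preserving algebra
automorphism `σ ≠ id` of `R′ = k⟨u,v⟩/(vu − uv − u² − 1)` has order 2, with
`σ(u) = −u` and `σ(v) = −v + δ·1` for some `δ ∈ k`. -/
theorem jordanDeform_automorphism_form
    (k : Type*) [Field k] [IsAlgClosed k] [CharZero k]
    (u v : RingQuot (JordanDeformRel k))
    (hu : u = RingQuot.mkAlgHom k (JordanDeformRel k) (FreeAlgebra.ι k 0))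
    (hv : v = RingQuot.mkAlgHom k (JordanDeformRel k) (FreeAlgebra.ι k 1))
    (σ : RingQuot (JordanDeformRel k) ≃ₐ[k] RingQuot (JordanDeformRel k))
    (hfin : ∃ n : ℕ, 1 ≤ n ∧ σ ^ n = 1) (hne : σ ≠ 1)
    (hσ : ∀ x ∈ Submodule.span k ({1, u, v} : Set (RingQuot (JordanDeformRel k))),
      σ x ∈ Submodule.span k ({1, u, v} : Set (RingQuot (JordanDeformRel k)))) :
    orderOf σ = 2 ∧ σ u = -u ∧ ∃ δ : k, σ v = -v + δ • (1 : RingQuot (JordanDeformRel k)) := by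
  obtain ⟨n, hn1, hσn⟩ := hfin
  -- extract coefficients of σ u and σ v
  have memu : σ u ∈ Submodule.span k ({1, u, v} : Set (RingQuot (JordanDeformRel k))) :=
    hσ u (Submodule.subset_span (by simp))
  have memv : σ v ∈ Submodule.span k ({1, u, v} : Set (RingQuot (JordanDeformRel k))) :=
    hσ v (Submodule.subset_span (by simp))
  rw [Submodule.mem_span_insert] at memu memv
  obtain ⟨a, z, hz, hσu⟩ := memu
  rw [Submodule.mem_span_insert] at hz
  obtain ⟨b, w, hw, rfl⟩ := hz
  rw [Submodule.mem_span_singleton] at hw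
  obtain ⟨c, rfl⟩ := hw
  obtain ⟨a', z, hz, hσv⟩ := memv
  rw [Submodule.mem_span_insert] at hz
  obtain ⟨b', w, hw, rfl⟩ := hz
  rw [Submodule.mem_span_singleton] at hw
  obtain ⟨c', rfl⟩ := hw
  -- the relation transported through σ
  have hrelσ : σ v * σ u = σ u * σ v + σ u * σ u + 1 := by
    have h2 := congrArg σ (by rw [hu, hv]; exact jd_relA :
      v * u = u * v + u * u + 1)
    simpa only [map_mul, map_add, map_one] using h2
  -- push through the representation
  have hPu : jdPhi (σ u) = jdP a b c := by
    rw [hσu, hu]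
    simp only [map_add, map_smul, map_one, jdPhi_u, jdPhi_v, jdP]
    · rw [hv]; simp only [map_smul, jdPhi_v]; abel
  have hPv : jdPhi (σ v) = jdP a' b' c' := by
    rw [hσv, hu]
    simp only [map_add, map_smul, map_one, jdPhi_u, jdPhi_v, jdP]
    · rw [hv]; simp only [map_smul, jdPhi_v]; abel
  have hEnd : jdP a' b' c' * jdP a b c
      = jdP a b c * jdP a' b' c' + jdP a b c * jdP a b c + 1 := by
    have h2 := congrArg jdPhi hrelσ
    simpa only [map_mul, map_add, map_one, hPu, hPv] using h2
  obtain ⟨hc, hab, h7, h8⟩ := jd_scalar_facts a b c a' b' c' hEnd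
  -- b ≠ 0
  have hb : b ≠ 0 := by
    intro hb0
    have h9 : σ u = a • 1 := by rw [hσu, hb0, hc]; simp
    have h10 : σ (a • (1 : RingQuot (JordanDeformRel k))) = a • 1 := by
      rw [map_smul, map_one]
    have := σ.injective (h9.trans h10.symm)
    exact jd_u_ne_smul_one a (by rw [← hu, this])
  have ha : a = 0 := by
    rcases mul_eq_zero.mp hab with h | h
    · exact h
    · exact absurd h hb
  have hc' : c' = b := mul_left_cancel₀ hb (by rw [h8]; ring)
  have hb2 : (b - 1) * (b + 1) = 0 := by
    subst ha; linear_combination h7 - h8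
  -- clean forms of σ u and σ v
  have hσu2 : σ u = b • u := by rw [hσu, ha, hc]; simp
  have hσv2 : σ v = a' • 1 + b' • u + b • v := by rw [hσv, hc']; abel
  rcases mul_eq_zero.mp hb2 with h1 | hbneg
  -- case b = 1 : contradiction
  · exfalso
    have hb1 : b = 1 := eq_of_sub_eq_zero h1
    subst hb1
    have hσu3 : σ u = u := by rw [hσu2, one_smul]
    have hwfix : σ (a' • (1 : RingQuot (JordanDeformRel k)) + b' • u)
        = a' • 1 + b' • u := by
      rw [map_add, map_smul, map_smul, map_one, hσu3]
    have hσv3 : σ v = v + (a' • (1 : RingQuot (JordanDeformRel k)) + b' • u) := by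
      rw [hσv2, one_smul]; abel
    have hfixpow : ∀ m : ℕ, (σ ^ m) (a' • (1 : RingQuot (JordanDeformRel k)) + b' • u)
        = a' • 1 + b' • u := by
      intro m
      induction m with
      | zero => simp
      | succ m ih => rw [pow_succ, AlgEquiv.mul_apply, hwfix, ih]
    have hvpow : ∀ m : ℕ, (σ ^ m) v
        = v + m • (a' • (1 : RingQuot (JordanDeformRel k)) + b' • u) := by
      intro m
      induction m with
      | zero => simp
      | succ m ih =>
        rw [pow_succ, AlgEquiv.mul_apply, hσv3, map_add, ih, hfixpow, succ_nsmul]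
        abel
    have hzero : (n : k) • (a' • (1 : RingQuot (JordanDeformRel k)) + b' • u) = 0 := by
      have h2 := hvpow n
      rw [hσn, AlgEquiv.one_apply] at h2
      rw [Nat.cast_smul_eq_nsmul]
      exact add_eq_left.mp h2.symm
    have hw0 : a' • (1 : RingQuot (JordanDeformRel k)) + b' • u = 0 := by
      rcases smul_eq_zero.mp hzero with h | h
      · exact absurd h (Nat.cast_ne_zero.mpr (by omega))
      · exact h
    have hσv4 : σ v = v := by rw [hσv3, hw0, add_zero]
    apply hne
    apply AlgEquiv.coe_algHom_injective
    apply jd_alghom_ext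
    · simpa [← hu] using hσu3
    · simpa [← hv] using hσv4
  -- case b = -1
  · have hb1 : b = -1 := eq_neg_of_add_eq_zero_left hbneg
    subst hb1
    have hσu3 : σ u = -u := by rw [hσu2]; module
    have hσv3 : σ v = a' • 1 + b' • u - v := by
      rw [hσv2]; module
    have hτu : (σ * σ) u = u := by
      rw [AlgEquiv.mul_apply, hσu3, map_neg, hσu3, neg_neg]
    have hτv : (σ * σ) v = v + (-(2 * b')) • u := by
      rw [AlgEquiv.mul_apply, hσv3, map_sub, map_add, map_smul, map_smul, map_one,
        hσu3, hσv3]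
      module
    have hτupow : ∀ m : ℕ, ((σ * σ) ^ m) u = u := by
      intro m
      induction m with
      | zero => simp
      | succ m ih => rw [pow_succ, AlgEquiv.mul_apply, hτu, ih]
    have hτvpow : ∀ m : ℕ, ((σ * σ) ^ m) v = v + m • ((-(2 * b')) • u) := by
      intro m
      induction m with
      | zero => simp
      | succ m ih =>
        rw [pow_succ, AlgEquiv.mul_apply, hτv, map_add, ih, map_smul, hτupow,
          succ_nsmul]
        abel
    have hτn : (σ * σ) ^ n = 1 := by
      rw [← sq, ← pow_mul, mul_comm 2 n, pow_mul, hσn, one_pow]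
    have hzero : (n : k) • ((-(2 * b')) • u) = 0 := by
      have h2 := hτvpow n
      rw [hτn, AlgEquiv.one_apply] at h2
      rw [Nat.cast_smul_eq_nsmul]
      exact add_eq_left.mp h2.symm
    have hb'0 : b' = 0 := by
      rcases smul_eq_zero.mp hzero with h | h
      · exact absurd h (Nat.cast_ne_zero.mpr (by omega))
      · rcases smul_eq_zero.mp h with h | h
        · have h2b : (2 : k) * b' = 0 := by linear_combination -h
          exact (mul_eq_zero.mp h2b).resolve_left two_ne_zero
        · exact absurd h (by rw [hu] at h; exact absurd h jd_u_ne_zero)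
    have hσ2 : σ ^ 2 = 1 := by
      rw [sq]
      apply AlgEquiv.coe_algHom_injective
      apply jd_alghom_ext
      · simpa [← hu] using hτu
      · have : (σ * σ) v = v := by rw [hτv, hb'0]; simp
        simpa [← hv] using this
    haveI : Fact (Nat.Prime 2) := ⟨Nat.prime_two⟩
    refine ⟨orderOf_eq_prime hσ2 hne, hσu3, a', ?_⟩
    rw [hσv3, hb'0]
    module
end

section
/- Let m ≥ 2, let ξ ∈ k be a primitive m-th root of unity, and let σ be a k-algebra automorphism of R with σ(u) = u and σ(v) = ξ v. For s ∈ ℤ let R_s denote the k-subspace {x ∈ R : σ(x) = ξ^s x}. Then the identity element 1 does not belong to the product R_1 · R_{m−1} (the k-linear span of all products xy with x ∈ R_1 and y ∈ R_{m−1}); in particular R, with the grading by eigenspaces of σ, is not strongly graded. -/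
/-- Proposition 6.5(a) (key computation): for the order-`m` diagonal automorphism `σ` of
`R = k⟨u,v⟩/(vu − uv − v)` with `σ(u) = u`, `σ(v) = ξ v`, the identity `1` is not in the
`k`-linear span of products `xy` with `x ∈ R_1` and `y ∈ R_{m−1}` (where
`R_s = {x : σ(x) = ξ^s x}`); so `R` is not strongly graded by the eigenspaces of `σ`. -/
theorem jordanWeyl_not_strongly_graded
    (k : Type*) [Field k] [IsAlgClosed k] [CharZero k]
    (u v : RingQuot (JordanWeylRel k))
    (hu : u = RingQuot.mkAlgHom k (JordanWeylRel k) (FreeAlgebra.ι k 0))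
    (hv : v = RingQuot.mkAlgHom k (JordanWeylRel k) (FreeAlgebra.ι k 1))
    (m : ℕ) (hm : 2 ≤ m) (ξ : k) (hξ : IsPrimitiveRoot ξ m)
    (σ : RingQuot (JordanWeylRel k) ≃ₐ[k] RingQuot (JordanWeylRel k))
    (hσu : σ u = u) (hσv : σ v = ξ • v) :
    (1 : RingQuot (JordanWeylRel k)) ∉
      Submodule.span k {z : RingQuot (JordanWeylRel k) |
        ∃ x y, σ x = ξ • x ∧ σ y = ξ ^ (m - 1) • y ∧ z = x * y} := by
  -- the augmentation ε : R → k, u ↦ 0, v ↦ 0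
  set F : FreeAlgebra k (Fin 2) →ₐ[k] k := FreeAlgebra.lift k (fun _ => (0 : k)) with hF
  have hrel : ∀ x y, JordanWeylRel k x y → F x = F y := by
    rintro x y ⟨⟩
    simp [hF]
  set ε : RingQuot (JordanWeylRel k) →ₐ[k] k :=
    RingQuot.liftAlgHom k ⟨F, hrel⟩ with hε
  have hεgen : ∀ i, ε (RingQuot.mkAlgHom k (JordanWeylRel k) (FreeAlgebra.ι k i)) = 0 := by
    intro i
    simp [hε, RingQuot.liftAlgHom_mkAlgHom_apply, hF]
  have hεu : ε u = 0 := by rw [hu]; exact hεgen 0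
  have hεv : ε v = 0 := by rw [hv]; exact hεgen 1
  -- ε ∘ σ = ε
  have hcomp : ε.comp σ.toAlgHom = ε := by
    apply RingQuot.ringQuot_ext'
    apply FreeAlgebra.hom_ext
    funext i
    simp only [Function.comp_apply, AlgHom.coe_comp, AlgHom.coe_coe, hεgen i]
    fin_cases i
    · show ε (σ (RingQuot.mkAlgHom k (JordanWeylRel k) (FreeAlgebra.ι k 0))) = 0
      rw [← hu, hσu, hεu]
    · show ε (σ (RingQuot.mkAlgHom k (JordanWeylRel k) (FreeAlgebra.ι k 1))) = 0
      rw [← hv, hσv, map_smul, hεv, smul_zero]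
  have hεσ : ∀ x, ε (σ x) = ε x := fun x => congrFun (congrArg DFunLike.coe hcomp) x
  have hξ1 : ξ ≠ 1 := hξ.ne_one (by omega)
  have key : ∀ x : RingQuot (JordanWeylRel k), σ x = ξ • x → ε x = 0 := by
    intro x hx
    have h1 : ε x = ξ * ε x := by
      conv_lhs => rw [← hεσ x, hx, map_smul, smul_eq_mul]
    have h2 : (1 - ξ) * ε x = 0 := by linear_combination h1
    rcases mul_eq_zero.1 h2 with h | h
    · exact absurd (by linear_combination -h) hξ1
    · exact h
  intro hmem
  have hle : Submodule.span k {z : RingQuot (JordanWeylRel k) |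
        ∃ x y, σ x = ξ • x ∧ σ y = ξ ^ (m - 1) • y ∧ z = x * y} ≤
      LinearMap.ker ε.toLinearMap := by
    rw [Submodule.span_le]
    rintro z ⟨x, y, hx, hy, rfl⟩
    simp only [SetLike.mem_coe, LinearMap.mem_ker, AlgHom.toLinearMap_apply, map_mul,
      key x hx, zero_mul]
  have h0 : ε 1 = 0 := hle hmem
  rw [map_one] at h0
  exact one_ne_zero h0
end

section
/- Let m ≥ 2, let ξ ∈ k be a primitive m-th root of unity, and let σ be a k-algebra automorphism of A_q with σ(u) = ξ u and σ(v) = ξ⁻¹ v. For s ∈ ℤ let (A_q)_s denote the k-subspace {x ∈ A_q : σ(x) = ξ^s x}. If q^i ≠ 1 for all 1 ≤ i ≤ m − 1 (i.e. the multiplicative order of q is at least m), then (A_q)_1 · (A_q)_{m−1} = (A_q)_0, where (A_q)_1 · (A_q)_{m−1} is the k-linear span of all products xy with x ∈ (A_q)_1 and y ∈ (A_q)_{m−1}; in particular 1 ∈ (A_q)_1 · (A_q)_{m−1}. -/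
open Polynomial

/-- Iterated affine substitution `Φ_j(X) = q^j X + (1 + q + ⋯ + q^{j-1})`. -/
noncomputable def qwPhi (k : Type*) [Field k] (q : k) : ℕ → k[X]
  | 0 => X
  | j + 1 => (qwPhi k q j).comp (C q * X + 1)

/-- `qwP j` is the polynomial with `v^j u^j = qwP j (vu)`. -/
noncomputable def qwP (k : Type*) [Field k] (q : k) : ℕ → k[X]
  | 0 => 1
  | j + 1 => X * ((qwP k q j).comp (C q * X + 1))

lemma qwPhi_eq (k : Type*) [Field k] (q : k) :
    ∀ j, qwPhi k q j = C (q ^ j) * X + C (∑ i ∈ Finset.range j, q ^ i) := by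
  intro j
  induction j with
  | zero => simp [qwPhi]
  | succ j ih =>
      rw [qwPhi, ih]
      simp only [add_comp, mul_comp, C_comp, X_comp, Finset.sum_range_succ, pow_succ, C_mul,
        C_add, C_1]
      ring

lemma qwP_eval_ne_zero {k : Type*} [Field k] {q : k} :
    ∀ (j n : ℕ), (∀ i, n ≤ i → i < n + j → (∑ l ∈ Finset.range i, q ^ l) ≠ 0) →
      (qwP k q j).eval (∑ l ∈ Finset.range n, q ^ l) ≠ 0 := by
  intro j
  induction j with
  | zero => intro n _; simp [qwP]
  | succ j ih =>
      intro n h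
      have hgs : q * (∑ l ∈ Finset.range n, q ^ l) + 1 = ∑ l ∈ Finset.range (n + 1), q ^ l := by
        rw [geom_sum_succ]
      rw [qwP, eval_mul, eval_X, eval_comp]
      simp only [eval_add, eval_mul, eval_C, eval_X, eval_one]
      rw [hgs]
      exact mul_ne_zero (h n le_rfl (by omega)) (ih (n + 1) (fun i h1 h2 => h i (by omega) (by omega)))

lemma qw_move {k : Type*} [Field k] {R : Type*} [Ring R] [Algebra k R]
    (t x : R) (g : k[X]) (hx : t * x = x * aeval t g) (P : k[X]) :
    (aeval t P) * x = x * aeval t (P.comp g) := by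
  have pow : ∀ n : ℕ, t ^ n * x = x * (aeval t g) ^ n := by
    intro n
    induction n with
    | zero => simp
    | succ n ihn =>
        calc t ^ (n + 1) * x = t ^ n * (t * x) := by rw [pow_succ, mul_assoc]
        _ = t ^ n * x * aeval t g := by rw [hx, ← mul_assoc]
        _ = x * ((aeval t g) ^ n * aeval t g) := by rw [ihn, mul_assoc]
        _ = x * (aeval t g) ^ (n + 1) := by rw [← pow_succ]
  induction P using Polynomial.induction_on' with
  | add p r hp hr => rw [add_comp, map_add, map_add, add_mul, mul_add, hp, hr]
  | monomial n c =>
      rw [← C_mul_X_pow_eq_monomial, mul_comp, C_comp, X_pow_comp, map_mul, map_mul, aeval_C,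
        map_pow, map_pow, aeval_X, mul_assoc, pow n, ← mul_assoc, Algebra.commutes, mul_assoc]

lemma qw_move_pow {k : Type*} [Field k] {R : Type*} [Ring R] [Algebra k R]
    (q : k) (t x : R) (hx : t * x = x * aeval t (C q * X + 1)) :
    ∀ (j : ℕ) (P : k[X]), (aeval t P) * x ^ j = x ^ j * aeval t (P.comp (qwPhi k q j)) := by
  intro j
  induction j with
  | zero => intro P; simp [qwPhi]
  | succ j ih =>
      intro P
      calc (aeval t P) * x ^ (j + 1) = (aeval t P * x ^ j) * x := by rw [pow_succ, mul_assoc]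
      _ = x ^ j * (aeval t (P.comp (qwPhi k q j)) * x) := by rw [ih, mul_assoc]
      _ = x ^ j * (x * aeval t ((P.comp (qwPhi k q j)).comp (C q * X + 1))) := by
          rw [qw_move t x _ hx]
      _ = x ^ (j + 1) * aeval t (P.comp (qwPhi k q (j + 1))) := by
          rw [pow_succ, mul_assoc, Polynomial.comp_assoc, qwPhi]

/-- Lemma 6.7 (key computation): for the order-`m` diagonal automorphism `σ` of `A_q` with
`σ(u) = ξ u`, `σ(v) = ξ⁻¹ v`, if the multiplicative order of `q` is at least `m`, then the
`k`-linear span of products `xy` with `x ∈ (A_q)_1 = {x : σ(x) = ξ x}` and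
`y ∈ (A_q)_{m−1} = {y : σ(y) = ξ^{m−1} y}` equals `(A_q)_0 = {x : σ(x) = x}`;
in particular `1` lies in this span. -/
theorem quantumWeyl_strongly_graded
    (k : Type*) [Field k] [IsAlgClosed k] [CharZero k] (q : k) (hq0 : q ≠ 0)
    (u v : RingQuot (QuantumWeylRel k q))
    (hu : u = RingQuot.mkAlgHom k (QuantumWeylRel k q) (FreeAlgebra.ι k 0))
    (hv : v = RingQuot.mkAlgHom k (QuantumWeylRel k q) (FreeAlgebra.ι k 1))
    (m : ℕ) (hm : 2 ≤ m) (ξ : k) (hξ : IsPrimitiveRoot ξ m)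
    (hq : ∀ i : ℕ, 1 ≤ i → i ≤ m - 1 → q ^ i ≠ 1)
    (σ : RingQuot (QuantumWeylRel k q) ≃ₐ[k] RingQuot (QuantumWeylRel k q))
    (hσu : σ u = ξ • u) (hσv : σ v = ξ⁻¹ • v) :
    ((Submodule.span k {z : RingQuot (QuantumWeylRel k q) |
        ∃ x y, σ x = ξ • x ∧ σ y = ξ ^ (m - 1) • y ∧ z = x * y} :
      Submodule k (RingQuot (QuantumWeylRel k q))) : Set (RingQuot (QuantumWeylRel k q)))
      = {x : RingQuot (QuantumWeylRel k q) | σ x = x} ∧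
    (1 : RingQuot (QuantumWeylRel k q)) ∈
      Submodule.span k {z : RingQuot (QuantumWeylRel k q) |
        ∃ x y, σ x = ξ • x ∧ σ y = ξ ^ (m - 1) • y ∧ z = x * y} := by
  -- the defining relation
  have hrel : v * u = q • (u * v) + 1 := by
    have h := RingQuot.mkAlgHom_rel k (QuantumWeylRel.rel (k := k) (q := q))
    rw [hu, hv]
    simpa [map_mul, map_add, map_smul, map_one] using h
  set t : RingQuot (QuantumWeylRel k q) := v * u with ht
  have haevalφ : aeval t (C q * X + 1) = q • t + 1 := by simp [Algebra.smul_def]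
  have haevalψ : aeval t (C q⁻¹ * (X - 1)) = q⁻¹ • (t - 1) := by simp [Algebra.smul_def]
  have htu : t * u = u * (q • t + 1) := by
    calc t * u = (q • (u * v) + 1) * u := by rw [hrel]
    _ = q • (u * (v * u)) + u := by rw [add_mul, one_mul, smul_mul_assoc, mul_assoc]
    _ = q • (u * t) + u := by rw [← ht]
    _ = u * (q • t + 1) := by rw [mul_add, mul_one, mul_smul_comm]
  have huv : u * v = q⁻¹ • (t - 1) := by
    rw [hrel, add_sub_cancel_right, inv_smul_smul₀ hq0]
  have htv : t * v = v * (q⁻¹ • (t - 1)) := by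
    conv_lhs => rw [ht]
    rw [mul_assoc, huv]
  have mvU : ∀ (j : ℕ) (P : k[X]),
      (aeval t P) * u ^ j = u ^ j * aeval t (P.comp (qwPhi k q j)) :=
    qw_move_pow q t u (by rw [haevalφ]; exact htu)
  have mvUone : ∀ P : k[X], (aeval t P) * u = u * aeval t (P.comp (C q * X + 1)) :=
    qw_move t u _ (by rw [haevalφ]; exact htu)
  have mvV : ∀ P : k[X], (aeval t P) * v = v * aeval t (P.comp (C q⁻¹ * (X - 1))) :=
    qw_move t v _ (by rw [haevalψ]; exact htv)
  have hvu_pow : ∀ j : ℕ, v ^ j * u ^ j = aeval t (qwP k q j) := by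
    intro j
    induction j with
    | zero => simp [qwP]
    | succ j ih =>
        calc v ^ (j + 1) * u ^ (j + 1) = v * ((v ^ j * u ^ j) * u) := by
              rw [pow_succ' v, pow_succ u]; simp only [mul_assoc]
        _ = v * (u * aeval t ((qwP k q j).comp (C q * X + 1))) := by rw [ih, mvUone]
        _ = t * aeval t ((qwP k q j).comp (C q * X + 1)) := by rw [← mul_assoc, ← ht]
        _ = aeval t (qwP k q (j + 1)) := by
            rw [qwP, map_mul, aeval_X]
  -- Bezout identity
  have hq1 : q ≠ 1 := by
    have := hq 1 le_rfl (by omega); simpa using this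
  have hgs_ne : ∀ i, 1 ≤ i → i ≤ m - 1 → (∑ l ∈ Finset.range i, q ^ l) ≠ 0 := by
    intro i h1 h2 hc
    have hmul := geom_sum_mul q i
    rw [hc, zero_mul] at hmul
    exact hq i h1 h2 (by linear_combination -hmul)
  have he : (qwP k q (m - 1)).eval 1 ≠ 0 := by
    have h1 : (1 : k) = ∑ l ∈ Finset.range 1, q ^ l := by simp
    rw [h1]
    exact qwP_eval_ne_zero (m - 1) 1 (fun i hi1 hi2 => hgs_ne i hi1 (by omega))
  obtain ⟨a, b, hab⟩ : ∃ a b : k[X], a * (X - C 1) + b * qwP k q (m - 1) = 1 := by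
    set p := qwP k q (m - 1) with hp'
    set e := p.eval 1 with he'
    have hp : p = C e + (X - C 1) * (p /ₘ (X - C 1)) := by
      conv_lhs => rw [← Polynomial.modByMonic_add_div p (X - C (1 : k))]
      rw [Polynomial.modByMonic_X_sub_C_eq_C_eval]
    have hCe : (C e⁻¹ : k[X]) * C e = 1 := by
      rw [← C_mul, inv_mul_cancel₀ he, C_1]
    exact ⟨-(C e⁻¹) * (p /ₘ (X - C 1)), C e⁻¹, by linear_combination C e⁻¹ * hp + hCe⟩
  -- the two explicit elements
  set A₀ : k[X] := (q • a).comp (C q * X + 1) with hA₀'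
  have hinner : ((C q * X + 1 : k[X])).comp (C q⁻¹ * (X - 1)) = X := by
    rw [add_comp, one_comp, mul_comp, C_comp, X_comp, ← mul_assoc, ← C_mul,
      mul_inv_cancel₀ hq0, C_1, one_mul]
    ring
  have hA₀ : A₀.comp (C q⁻¹ * (X - 1)) = q • a := by
    rw [hA₀', Polynomial.comp_assoc, hinner, comp_X]
  set Q : k := q ^ (m - 1) with hQ'
  have hQ0 : Q ≠ 0 := pow_ne_zero _ hq0
  set Cp : k[X] := b.comp (C Q⁻¹ * (X - C (∑ i ∈ Finset.range (m - 1), q ^ i))) with hCp'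
  have hCp : Cp.comp (qwPhi k q (m - 1)) = b := by
    rw [hCp', Polynomial.comp_assoc, qwPhi_eq]
    rw [mul_comp, C_comp, sub_comp, X_comp, C_comp, add_sub_cancel_right, ← mul_assoc,
      ← C_mul, inv_mul_cancel₀ hQ0, C_1, one_mul, comp_X]
  -- the products
  have g1 : (u * aeval t A₀) * v = aeval t (a * (X - C 1)) := by
    have h1 : ((X : k[X]) - C 1) * a = a * (X - C 1) := by ring
    rw [mul_assoc, mvV A₀, hA₀, ← mul_assoc, huv, map_smul, smul_mul_smul_comm,
      inv_mul_cancel₀ hq0, one_smul,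
      show t - 1 = aeval t ((X : k[X]) - C 1) by rw [map_sub, aeval_X, aeval_C, map_one], ← map_mul, h1]
  have g2 : (v ^ (m - 1) * aeval t Cp) * u ^ (m - 1) = aeval t (qwP k q (m - 1) * b) := by
    rw [mul_assoc, mvU (m - 1) Cp, hCp, ← mul_assoc, hvu_pow, ← map_mul]
  have hone : (u * aeval t A₀) * v + (v ^ (m - 1) * aeval t Cp) * u ^ (m - 1) = 1 := by
    have hab' : a * (X - C 1) + qwP k q (m - 1) * b = 1 := by linear_combination hab
    rw [g1, g2, ← map_add, hab', map_one]
  -- eigenvector facts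
  have hξ0 : ξ ≠ 0 := hξ.ne_zero (by omega)
  have hξm : ξ ^ m = 1 := hξ.pow_eq_one
  have hξinv : ξ⁻¹ = ξ ^ (m - 1) := by
    have h : ξ ^ (m - 1) * ξ = 1 := by rw [← pow_succ, show m - 1 + 1 = m by omega, hξm]
    exact inv_eq_of_mul_eq_one_left h
  have hξinv' : (ξ⁻¹) ^ (m - 1) = ξ := by
    rw [inv_pow, ← hξinv, inv_inv]
  have hσt : σ t = t := by
    rw [ht, map_mul, hσu, hσv, smul_mul_smul_comm, inv_mul_cancel₀ hξ0, one_smul]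
  have hσaeval : ∀ P : k[X], σ (aeval t P) = aeval t P := by
    intro P
    rw [← Polynomial.aeval_algHom_apply σ t P, hσt]
  have hx1 : σ (u * aeval t A₀) = ξ • (u * aeval t A₀) := by
    rw [map_mul, hσu, hσaeval, smul_mul_assoc]
  have hy1 : σ v = ξ ^ (m - 1) • v := by rw [hσv, hξinv]
  have hx2 : σ (v ^ (m - 1) * aeval t Cp) = ξ • (v ^ (m - 1) * aeval t Cp) := by
    rw [map_mul, map_pow, hσv, hσaeval, _root_.smul_pow, hξinv', smul_mul_assoc]
  have hy2 : σ (u ^ (m - 1)) = ξ ^ (m - 1) • u ^ (m - 1) := by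
    rw [map_pow, hσu, _root_.smul_pow]
  have hmem1 : (1 : RingQuot (QuantumWeylRel k q)) ∈ Submodule.span k {z : RingQuot (QuantumWeylRel k q) |
      ∃ x y, σ x = ξ • x ∧ σ y = ξ ^ (m - 1) • y ∧ z = x * y} := by
    rw [← hone]
    exact Submodule.add_mem _
      (Submodule.subset_span ⟨_, _, hx1, hy1, rfl⟩)
      (Submodule.subset_span ⟨_, _, hx2, hy2, rfl⟩)
  have hξmul : ∀ z : RingQuot (QuantumWeylRel k q), ξ • (ξ ^ (m - 1) • z) = z := by
    intro z
    rw [smul_smul, ← pow_succ', show m - 1 + 1 = m by omega, hξm, one_smul]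
  refine ⟨?_, hmem1⟩
  ext z
  simp only [SetLike.mem_coe, Set.mem_setOf_eq]
  constructor
  · intro hz
    refine Submodule.span_induction ?_ ?_ ?_ ?_ hz
    · rintro w ⟨x, y, hx, hy, rfl⟩
      rw [map_mul, hx, hy, smul_mul_assoc, mul_smul_comm, hξmul]
    · exact map_zero σ
    · intro x y _ _ hx hy
      rw [map_add, hx, hy]
    · intro c x _ hx
      rw [map_smul, hx]
  · intro hz
    have hz1 : z = (z * (u * aeval t A₀)) * v + (z * (v ^ (m - 1) * aeval t Cp)) * u ^ (m - 1) := by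
      rw [mul_assoc z, mul_assoc z, ← mul_add z, hone, mul_one]
    rw [hz1]
    refine Submodule.add_mem _
      (Submodule.subset_span ⟨_, _, ?_, hy1, rfl⟩)
      (Submodule.subset_span ⟨_, _, ?_, hy2, rfl⟩)
    · rw [map_mul, hz, hx1, mul_smul_comm]
    · rw [map_mul, hz, hx2, mul_smul_comm]
end
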